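/- arXiv:math/0505310 — 8 statements merged into one kernel-verified Lean document; each statement's English description precedes it below -/
import Mathlib

section
/- For every integer N ≥ 2, all indices 1 ≤ i ≤ N and 1 ≤ j ≤ N−1, and every smooth complex-valued function f of the variables T_{k,i}, the Gauss–Givental operators satisfy the commutation relation E_{i,i}(E_{j,j+1} f) − E_{j,j+1}(E_{i,i} f) = (δ_{i,j} − δ_{i,j+1}) · E_{j,j+1} f. -/
noncomputable section

/-- Value of the variable `T_{k,i}` (1-based indices), with the convention that
`T_{k,i} = 0` whenever `(k,i)` does not satisfy `1 ≤ i ≤ k ≤ N-1`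
(in particular `T_{N,i} = 0`). -/
def tv (N : ℕ) (T : (Fin N × Fin N) → ℝ) (k i : ℕ) : ℝ :=
  if h : 1 ≤ i ∧ i ≤ k ∧ k ≤ N - 1 then T (⟨k - 1, by omega⟩, ⟨i - 1, by omega⟩) else 0

/-- Partial derivative `∂f/∂T_{k,i}` (1-based indices), with the convention that it is
zero whenever `(k,i)` does not satisfy `1 ≤ i ≤ k ≤ N-1`. -/
def pd (N : ℕ) (f : ((Fin N × Fin N) → ℝ) → ℂ) (k i : ℕ) (T : (Fin N × Fin N) → ℝ) : ℂ :=
  if h : 1 ≤ i ∧ i ≤ k ∧ k ≤ N - 1 then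
    fderiv ℝ f T (Pi.single ((⟨k - 1, by omega⟩ : Fin N), (⟨i - 1, by omega⟩ : Fin N)) 1)
  else 0

/-- The Gauss–Givental Cartan operator `E_{i,i}`. -/
def Ed (N : ℕ) (μ : ℕ → ℂ) (i : ℕ) (f : ((Fin N × Fin N) → ℝ) → ℂ)
    (T : (Fin N × Fin N) → ℝ) : ℂ :=
  μ i * f T + ∑ k ∈ Finset.Icc 1 (i - 1), pd N f (N + k - i) k T
    - ∑ k ∈ Finset.Icc i (N - 1), pd N f k i T

/-- The Gauss–Givental raising operator `E_{i,i+1}`. -/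
def Er (N : ℕ) (i : ℕ) (f : ((Fin N × Fin N) → ℝ) → ℂ) (T : (Fin N × Fin N) → ℝ) : ℂ :=
  ∑ n ∈ Finset.Icc 1 i,
    (∑ k ∈ Finset.Icc n i, (Real.exp (tv N T (N + k - i) k - tv N T (N + k - i - 1) k) : ℂ)) *
      (pd N f (N + n - i - 1) n T - pd N f (N + n - i - 1) (n - 1) T)

/-! `E_{i,i}` is the constant-coefficient operator `μ_i + ∂_v` along a fixed direction `v`, while
`E_{j,j+1} = Σ_n c_n ∂_{w_n}` is a vector field whose coefficients `c_n` are sums of exponentials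
`exp ℓ_k` of linear forms `ℓ_k = T_{N+k-j,k} - T_{N+k-j-1,k}`. By the symmetry of second
derivatives, `[μ + ∂_v, Σ c_n ∂_{w_n}] = Σ (∂_v c_n) ∂_{w_n}`, and `∂_v exp ℓ_k = ℓ_k(v) exp ℓ_k`.
The commutation relation thus reduces to the linear identity `ℓ_k(v) = δ_{i,j} - δ_{i,j+1}`,
the pairing of the root `e_j - e_{j+1}` with `e_i`. -/

section DirectionalDerivatives

variable {E F : Type*} [NormedAddCommGroup E] [NormedSpace ℝ E]
  [NormedAddCommGroup F] [NormedSpace ℝ F]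

def constCoeffOp (μ : ℂ) (v : E) (f : E → ℂ) : E → ℂ :=
  fun S => μ * f S + fderiv ℝ f S v

def vectorFieldOp {ι : Type*} (s : Finset ι) (c : ι → E → ℂ) (w : ι → E) (f : E → ℂ) : E → ℂ :=
  fun S => ∑ n ∈ s, c n S * fderiv ℝ f S (w n)

theorem differentiableAt_fderiv_apply {f : E → F} (hf : ContDiff ℝ 2 f) (w x : E) :
    DifferentiableAt ℝ (fun S => fderiv ℝ f S w) x :=
  ((hf.fderiv_right (m := 1) le_rfl).differentiable one_ne_zero x).clm_apply
    (differentiableAt_const w)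

theorem fderiv_fderiv_apply_comm {f : E → F} (hf : ContDiff ℝ 2 f) (x v w : E) :
    fderiv ℝ (fun S => fderiv ℝ f S w) x v = fderiv ℝ (fun S => fderiv ℝ f S v) x w := by
  have hdf := (hf.fderiv_right (m := 1) le_rfl).differentiable one_ne_zero x
  rw [fderiv_clm_apply hdf (differentiableAt_const w),
    fderiv_clm_apply hdf (differentiableAt_const v)]
  simpa using hf.contDiffAt.isSymmSndFDerivAt (by simp) v w

theorem fderiv_constCoeffOp_apply (μ : ℂ) (v : E) {f : E → ℂ} (hf : ContDiff ℝ 2 f) (x w : E) :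
    fderiv ℝ (constCoeffOp μ v f) x w
      = μ * fderiv ℝ f x w + fderiv ℝ (fun S => fderiv ℝ f S v) x w := by
  have hdf : DifferentiableAt ℝ f x := hf.differentiable two_ne_zero x
  unfold constCoeffOp
  rw [fderiv_fun_add (hdf.const_mul μ) (differentiableAt_fderiv_apply hf v x),
    fderiv_const_mul hdf]
  simp

theorem fderiv_vectorFieldOp_apply {ι : Type*} (s : Finset ι) {c : ι → E → ℂ} (w : ι → E)
    {f : E → ℂ} (hf : ContDiff ℝ 2 f) {x : E} (hc : ∀ n ∈ s, DifferentiableAt ℝ (c n) x) (v : E) :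
    fderiv ℝ (vectorFieldOp s c w f) x v = ∑ n ∈ s,
      (c n x * fderiv ℝ (fun S => fderiv ℝ f S (w n)) x v
        + fderiv ℝ f x (w n) * fderiv ℝ (c n) x v) := by
  unfold vectorFieldOp
  have hterm : ∀ n ∈ s, DifferentiableAt ℝ (fun S => c n S * fderiv ℝ f S (w n)) x :=
    fun n hn => (hc n hn).mul (differentiableAt_fderiv_apply hf (w n) x)
  rw [fderiv_fun_sum hterm, sum_apply]
  refine Finset.sum_congr rfl fun n hn => ?_
  rw [fderiv_fun_mul (hc n hn) (differentiableAt_fderiv_apply hf (w n) x)]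
  simp

theorem constCoeffOp_vectorFieldOp_commutator {ι : Type*} (s : Finset ι) {c : ι → E → ℂ}
    (w : ι → E) (μ : ℂ) (v : E) {f : E → ℂ} (hf : ContDiff ℝ 2 f) {x : E}
    (hc : ∀ n ∈ s, DifferentiableAt ℝ (c n) x) :
    constCoeffOp μ v (vectorFieldOp s c w f) x - vectorFieldOp s c w (constCoeffOp μ v f) x
      = ∑ n ∈ s, fderiv ℝ (c n) x v * fderiv ℝ f x (w n) := by
  rw [constCoeffOp, fderiv_vectorFieldOp_apply s w hf hc, vectorFieldOp, vectorFieldOp]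
  simp only [fderiv_constCoeffOp_apply μ v hf, fderiv_fderiv_apply_comm hf x v]
  rw [Finset.mul_sum, ← Finset.sum_add_distrib, ← Finset.sum_sub_distrib]
  refine Finset.sum_congr rfl fun n _ => ?_
  ring

theorem fderiv_ofReal_exp_clm_apply (ℓ : E →L[ℝ] ℝ) (x v : E) :
    fderiv ℝ (fun S => (Real.exp (ℓ S) : ℂ)) x v = ℓ v * Real.exp (ℓ x) := by
  have h : HasFDerivAt (fun S => (Real.exp (ℓ S) : ℂ))
      (Complex.ofRealCLM.comp (Real.exp (ℓ x) • ℓ)) x :=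
    Complex.ofRealCLM.hasFDerivAt.comp x ℓ.hasFDerivAt.exp
  rw [h.fderiv]
  simp [mul_comm]

end DirectionalDerivatives

section GaussGivental

def basisVec (N k i : ℕ) : (Fin N × Fin N) → ℝ :=
  if h : 1 ≤ i ∧ i ≤ k ∧ k ≤ N - 1 then
    Pi.single ((⟨k - 1, by omega⟩ : Fin N), (⟨i - 1, by omega⟩ : Fin N)) 1 else 0

def coordCLM (N k i : ℕ) : ((Fin N × Fin N) → ℝ) →L[ℝ] ℝ :=
  if h : 1 ≤ i ∧ i ≤ k ∧ k ≤ N - 1 then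
    ContinuousLinearMap.proj ((⟨k - 1, by omega⟩ : Fin N), (⟨i - 1, by omega⟩ : Fin N)) else 0

theorem pd_eq_fderiv_basisVec (N : ℕ) (f : ((Fin N × Fin N) → ℝ) → ℂ) (k i : ℕ)
    (T : (Fin N × Fin N) → ℝ) : pd N f k i T = fderiv ℝ f T (basisVec N k i) := by
  unfold pd basisVec
  split_ifs <;> simp

theorem tv_eq_coordCLM (N : ℕ) (T : (Fin N × Fin N) → ℝ) (k i : ℕ) :
    tv N T k i = coordCLM N k i T := by
  unfold tv coordCLM
  split_ifs <;> simp

theorem coordCLM_basisVec (N a b k i : ℕ) :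
    coordCLM N a b (basisVec N k i) =
      if b = i ∧ a = k ∧ 1 ≤ b ∧ b ≤ a ∧ a ≤ N - 1 then 1 else 0 := by
  unfold coordCLM basisVec
  split_ifs <;> simp [Pi.single_apply, Fin.ext_iff] <;> omega

def cartanDir (N i : ℕ) : (Fin N × Fin N) → ℝ :=
  ∑ k ∈ Finset.Icc 1 (i - 1), basisVec N (N + k - i) k
    - ∑ k ∈ Finset.Icc i (N - 1), basisVec N k i

def raiseDir (N j n : ℕ) : (Fin N × Fin N) → ℝ :=
  basisVec N (N + n - j - 1) n - basisVec N (N + n - j - 1) (n - 1)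

def rootCLM (N j k : ℕ) : ((Fin N × Fin N) → ℝ) →L[ℝ] ℝ :=
  coordCLM N (N + k - j) k - coordCLM N (N + k - j - 1) k

def raiseCoeff (N j n : ℕ) (T : (Fin N × Fin N) → ℝ) : ℂ :=
  ∑ k ∈ Finset.Icc n j, (Real.exp (rootCLM N j k T) : ℂ)

theorem Ed_eq_constCoeffOp (N : ℕ) (μ : ℕ → ℂ) (i : ℕ) :
    Ed N μ i = constCoeffOp (μ i) (cartanDir N i) := by
  ext f T
  simp only [Ed, constCoeffOp, cartanDir, pd_eq_fderiv_basisVec, map_sub, map_sum]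
  ring

theorem Er_eq_vectorFieldOp (N j : ℕ) :
    Er N j = vectorFieldOp (Finset.Icc 1 j) (raiseCoeff N j) (raiseDir N j) := by
  ext f T
  simp only [Er, vectorFieldOp, raiseCoeff, rootCLM, raiseDir, tv_eq_coordCLM,
    pd_eq_fderiv_basisVec, map_sub, sub_apply]

theorem coordCLM_cartanDir (N a b i : ℕ) :
    coordCLM N a b (cartanDir N i) =
      (if 1 ≤ b ∧ b ≤ a ∧ a ≤ N - 1 ∧ b < i ∧ a + i = N + b then 1 else 0)
        - if 1 ≤ b ∧ b ≤ a ∧ a ≤ N - 1 ∧ b = i then 1 else 0 := by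
  simp only [cartanDir, map_sub, map_sum, coordCLM_basisVec, ite_and, Finset.sum_ite_irrel,
    Finset.sum_const_zero, Finset.sum_ite_eq, Finset.mem_Icc]
  split_ifs <;> first | rfl | omega

theorem rootCLM_cartanDir {N i j k : ℕ} (hk : 1 ≤ k) (hkj : k ≤ j) (hj : j ≤ N - 1) :
    rootCLM N j k (cartanDir N i) = (if i = j then 1 else 0) - if i = j + 1 then 1 else 0 := by
  simp only [rootCLM, sub_apply, coordCLM_cartanDir]
  split_ifs <;> first | omega | norm_num

theorem differentiable_raiseCoeff (N j n : ℕ) : Differentiable ℝ (raiseCoeff N j n) := by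
  unfold raiseCoeff
  fun_prop

theorem fderiv_raiseCoeff_cartanDir {N i j n : ℕ} (hn : 1 ≤ n) (hj : j ≤ N - 1)
    (T : (Fin N × Fin N) → ℝ) :
    fderiv ℝ (raiseCoeff N j n) T (cartanDir N i)
      = (((if i = j then 1 else 0) : ℂ) - if i = j + 1 then 1 else 0) * raiseCoeff N j n T := by
  unfold raiseCoeff
  rw [fderiv_fun_sum (fun k _ => by fun_prop), sum_apply, Finset.mul_sum]
  refine Finset.sum_congr rfl fun k hk => ?_
  obtain ⟨hnk, hkj⟩ := Finset.mem_Icc.mp hk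
  rw [fderiv_ofReal_exp_clm_apply, rootCLM_cartanDir (hn.trans hnk) hkj hj]
  split_ifs <;> simp

end GaussGivental

theorem commutator_diag_raise_general (N : ℕ) (μ : ℕ → ℂ)
    (f : ((Fin N × Fin N) → ℝ) → ℂ) (hf : ContDiff ℝ (⊤ : ℕ∞) f)
    (i j : ℕ) (hj2 : j ≤ N - 1)
    (T : (Fin N × Fin N) → ℝ) :
    Ed N μ i (fun S => Er N j f S) T - Er N j (fun S => Ed N μ i f S) T
      = (((if i = j then 1 else 0) : ℂ) - (if i = j + 1 then 1 else 0)) * Er N j f T := by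
  rw [Ed_eq_constCoeffOp, Er_eq_vectorFieldOp,
    constCoeffOp_vectorFieldOp_commutator _ _ _ _ (hf.of_le (WithTop.coe_le_coe.2 le_top))
      fun n _ => (differentiable_raiseCoeff N j n).differentiableAt,
    vectorFieldOp, Finset.mul_sum]
  refine Finset.sum_congr rfl fun n hn => ?_
  rw [fderiv_raiseCoeff_cartanDir (Finset.mem_Icc.mp hn).1 hj2, mul_assoc]

/-- the commutation relation
`[E_{i,i}, E_{j,j+1}] = (δ_{i,j} − δ_{i,j+1}) E_{j,j+1}` for the Gauss–Givental operators. -/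
theorem commutator_diag_raise (N : ℕ) (hN : 2 ≤ N) (μ : ℕ → ℂ)
    (f : ((Fin N × Fin N) → ℝ) → ℂ) (hf : ContDiff ℝ (⊤ : ℕ∞) f)
    (i j : ℕ) (hi1 : 1 ≤ i) (hi2 : i ≤ N) (hj1 : 1 ≤ j) (hj2 : j ≤ N - 1)
    (T : (Fin N × Fin N) → ℝ) :
    Ed N μ i (fun S => Er N j f S) T - Er N j (fun S => Ed N μ i f S) T
      = (((if i = j then 1 else 0) : ℂ) - (if i = j + 1 then 1 else 0)) * Er N j f T :=
  commutator_diag_raise_general N μ f hf i j hj2 T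
end
end

section
/- For every integer N ≥ 2, all indices 1 ≤ i ≤ N and 1 ≤ j ≤ N−1, and every smooth complex-valued function f of the variables T_{k,i}, the Gauss–Givental operators satisfy the commutation relation E_{i,i}(E_{j+1,j} f) − E_{j+1,j}(E_{i,i} f) = (δ_{i,j+1} − δ_{i,j}) · E_{j+1,j} f. -/
noncomputable section

/-- The Gauss–Givental lowering operator `E_{i+1,i}`. -/
def El (N : ℕ) (μ : ℕ → ℂ) (i : ℕ) (f : ((Fin N × Fin N) → ℝ) → ℂ)
    (T : (Fin N × Fin N) → ℝ) : ℂ :=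
  ∑ k ∈ Finset.Icc i (N - 1),
    (Real.exp (tv N T k i - tv N T (k + 1) (i + 1)) : ℂ) *
      ((μ i - μ (i + 1)) * f T + ∑ s ∈ Finset.Icc i k, (pd N f s (i + 1) T - pd N f s i T))

/-! Both operators are assembled from constant-coefficient operators `α + ∂_v`:
`E_{i,i} = μ_i + ∂_{v_i}` and `E_{j+1,j} = Σ_k c_k (μ_j - μ_{j+1} + ∂_{w_k})`, where
`v_i = cartanDir N i`, `w_k = lowerDir N j k` and `c_k = lowerCoeff N j k = exp (T_{k,j} - T_{k+1,j+1})`.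
Constant-coefficient operators commute (symmetry of second derivatives), so in the commutator only
`∂_{v_i}` falling on the coefficients survives, and each `c_k` is an eigenfunction of `∂_{v_i}` with
eigenvalue `δ_{i,j+1} - δ_{i,j}`. -/

namespace GaussGivental

open Finset

section FirstOrderOp

variable {E 𝔸 : Type*} [NormedAddCommGroup E] [NormedSpace ℝ E]
  [NormedCommRing 𝔸] [NormedAlgebra ℝ 𝔸] {f : E → 𝔸} {x : E}

def firstOrderOp (α : 𝔸) (v : E) (f : E → 𝔸) (x : E) : 𝔸 :=
  α * f x + fderiv ℝ f x v

theorem differentiableAt_fderiv_apply (hf : ContDiffAt ℝ 2 f x) (v : E) :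
    DifferentiableAt ℝ (fun y => fderiv ℝ f y v) x :=
  ((hf.fderiv_right (m := 1) le_rfl).differentiableAt one_ne_zero).clm_apply
    (differentiableAt_const v)

theorem fderiv_fderiv_apply_comm (hf : ContDiffAt ℝ 2 f x) (v w : E) :
    fderiv ℝ (fun y => fderiv ℝ f y w) x v = fderiv ℝ (fun y => fderiv ℝ f y v) x w := by
  have hd : DifferentiableAt ℝ (fderiv ℝ f) x :=
    (hf.fderiv_right (m := 1) le_rfl).differentiableAt one_ne_zero
  rw [fderiv_clm_apply hd (differentiableAt_const w),
    fderiv_clm_apply hd (differentiableAt_const v)]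
  simpa using hf.isSymmSndFDerivAt (by simp) v w

theorem differentiableAt_firstOrderOp (hf : ContDiffAt ℝ 2 f x) (α : 𝔸) (v : E) :
    DifferentiableAt ℝ (firstOrderOp α v f) x :=
  ((hf.differentiableAt two_ne_zero).const_mul α).add (differentiableAt_fderiv_apply hf v)

theorem firstOrderOp_sum {ι : Type*} (s : Finset ι) {g : ι → E → 𝔸}
    (hg : ∀ k ∈ s, DifferentiableAt ℝ (g k) x) (α : 𝔸) (v : E) :
    firstOrderOp α v (fun y => ∑ k ∈ s, g k y) x = ∑ k ∈ s, firstOrderOp α v (g k) x := by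
  simp only [firstOrderOp, fderiv_fun_sum hg, mul_sum, sum_add_distrib,
    FunLike.coe_sum, Finset.sum_apply]

theorem firstOrderOp_mul {c g : E → 𝔸} (hc : DifferentiableAt ℝ c x) (hg : DifferentiableAt ℝ g x)
    (α : 𝔸) (v : E) :
    firstOrderOp α v (fun y => c y * g y) x
      = fderiv ℝ c x v * g x + c x * firstOrderOp α v g x := by
  simp only [firstOrderOp, fderiv_fun_mul hc hg, add_apply, smul_apply, smul_eq_mul]
  ring

theorem firstOrderOp_comm (hf : ContDiffAt ℝ 2 f x) (α β : 𝔸) (v w : E) :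
    firstOrderOp α v (firstOrderOp β w f) x = firstOrderOp β w (firstOrderOp α v f) x := by
  have hf1 : DifferentiableAt ℝ f x := hf.differentiableAt two_ne_zero
  unfold firstOrderOp
  rw [fderiv_fun_add (hf1.const_mul β) (differentiableAt_fderiv_apply hf w),
    fderiv_fun_add (hf1.const_mul α) (differentiableAt_fderiv_apply hf v),
    fderiv_const_mul hf1, fderiv_const_mul hf1]
  simp only [add_apply, smul_apply, smul_eq_mul, fderiv_fderiv_apply_comm hf v w]
  ring

theorem firstOrderOp_sum_mul_sub {ι : Type*} (s : Finset ι) {c : ι → E → 𝔸}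
    (hf : ContDiffAt ℝ 2 f x) (hc : ∀ k ∈ s, DifferentiableAt ℝ (c k) x)
    (β : 𝔸) (v : E) (α : ι → 𝔸) (w : ι → E) :
    firstOrderOp β v (fun y => ∑ k ∈ s, c k y * firstOrderOp (α k) (w k) f y) x
        - ∑ k ∈ s, c k x * firstOrderOp (α k) (w k) (firstOrderOp β v f) x
      = ∑ k ∈ s, fderiv ℝ (c k) x v * firstOrderOp (α k) (w k) f x := by
  rw [firstOrderOp_sum s (g := fun k y => c k y * firstOrderOp (α k) (w k) f y)
      (fun k hk => (hc k hk).mul (differentiableAt_firstOrderOp hf _ _)), ← sum_sub_distrib]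
  refine sum_congr rfl fun k hk => ?_
  rw [firstOrderOp_mul (hc k hk) (differentiableAt_firstOrderOp hf _ _), firstOrderOp_comm hf]
  ring

end FirstOrderOp

variable {N : ℕ}

def basisVec (N k i : ℕ) : (Fin N × Fin N) → ℝ :=
  if h : 1 ≤ i ∧ i ≤ k ∧ k ≤ N - 1 then
    Pi.single ((⟨k - 1, by omega⟩ : Fin N), (⟨i - 1, by omega⟩ : Fin N)) 1
  else 0

def coordCLM (N k i : ℕ) : ((Fin N × Fin N) → ℝ) →L[ℝ] ℝ :=
  if h : 1 ≤ i ∧ i ≤ k ∧ k ≤ N - 1 then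
    ContinuousLinearMap.proj ((⟨k - 1, by omega⟩ : Fin N), (⟨i - 1, by omega⟩ : Fin N))
  else 0

theorem coordCLM_apply (k i : ℕ) (T : (Fin N × Fin N) → ℝ) :
    coordCLM N k i T = tv N T k i := by
  unfold coordCLM tv
  split_ifs <;> rfl

theorem pd_eq_fderiv (f : ((Fin N × Fin N) → ℝ) → ℂ) (k i : ℕ) (T : (Fin N × Fin N) → ℝ) :
    pd N f k i T = fderiv ℝ f T (basisVec N k i) := by
  unfold pd basisVec
  split_ifs <;> simp

theorem tv_basisVec (a b k i : ℕ) :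
    tv N (basisVec N a b) k i
      = if (1 ≤ i ∧ i ≤ k ∧ k ≤ N - 1) ∧ a = k ∧ b = i then 1 else 0 := by
  unfold tv basisVec
  split_ifs <;> simp_all [Pi.single_apply]
  omega

def cartanDir (N i : ℕ) : (Fin N × Fin N) → ℝ :=
  ∑ a ∈ Icc 1 (i - 1), basisVec N (N + a - i) a - ∑ a ∈ Icc i (N - 1), basisVec N a i

def lowerDir (N j k : ℕ) : (Fin N × Fin N) → ℝ :=
  ∑ s ∈ Icc j k, (basisVec N s (j + 1) - basisVec N s j)

def lowerCoeff (N j k : ℕ) (T : (Fin N × Fin N) → ℝ) : ℂ :=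
  Real.exp (tv N T k j - tv N T (k + 1) (j + 1))

theorem Ed_eq_firstOrderOp (μ : ℕ → ℂ) (i : ℕ) :
    Ed N μ i = firstOrderOp (μ i) (cartanDir N i) := by
  funext f T
  simp only [Ed, firstOrderOp, cartanDir, pd_eq_fderiv, map_sub, map_sum]
  ring

theorem El_eq_sum (μ : ℕ → ℂ) (j : ℕ) :
    El N μ j = fun f T => ∑ k ∈ Icc j (N - 1),
      lowerCoeff N j k T * firstOrderOp (μ j - μ (j + 1)) (lowerDir N j k) f T := by
  funext f T
  simp only [El, lowerCoeff, firstOrderOp, lowerDir, pd_eq_fderiv, map_sub, map_sum]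

theorem hasFDerivAt_lowerCoeff (j k : ℕ) (T : (Fin N × Fin N) → ℝ) :
    HasFDerivAt (lowerCoeff N j k) (Complex.ofRealCLM.comp
      (Real.exp (tv N T k j - tv N T (k + 1) (j + 1)) •
        (coordCLM N k j - coordCLM N (k + 1) (j + 1)))) T := by
  set L := coordCLM N k j - coordCLM N (k + 1) (j + 1)
  have hL : ∀ S, L S = tv N S k j - tv N S (k + 1) (j + 1) := fun S => by
    simp [L, coordCLM_apply]
  have hfun : lowerCoeff N j k = Complex.ofRealCLM ∘ fun S => Real.exp (L S) := by
    funext S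
    simp [lowerCoeff, hL]
  rw [hfun, ← hL]
  exact Complex.ofRealCLM.hasFDerivAt.comp T L.hasFDerivAt.exp

theorem fderiv_lowerCoeff_apply (j k : ℕ) (T v : (Fin N × Fin N) → ℝ) :
    fderiv ℝ (lowerCoeff N j k) T v
      = lowerCoeff N j k T * (tv N v k j - tv N v (k + 1) (j + 1) : ℝ) := by
  simp [(hasFDerivAt_lowerCoeff j k T).fderiv, lowerCoeff, coordCLM_apply]

theorem tv_cartanDir {i j k : ℕ} (hkj : 1 ≤ j ∧ j ≤ k ∧ k ≤ N - 1) :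
    tv N (cartanDir N i) k j
      = (if j < i ∧ k + i = N + j then 1 else 0) - if i = j then 1 else 0 := by
  simp only [cartanDir, ← coordCLM_apply, map_sub, map_sum]
  simp only [coordCLM_apply, tv_basisVec]
  rw [sum_eq_single j (fun b hb _ => if_neg (by simp at hb; omega))
      (fun hj => if_neg (by simp at hj; omega)),
    sum_eq_single k (fun b hb _ => if_neg (by simp at hb; omega))
      (fun hk => if_neg (by simp at hk; omega))]
  congr 1 <;> apply if_congr _ rfl rfl <;> omega

theorem tv_cartanDir_sub_succ {i j k : ℕ} (hj : 1 ≤ j) (hk : j ≤ k ∧ k ≤ N - 1) :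
    tv N (cartanDir N i) k j - tv N (cartanDir N i) (k + 1) (j + 1)
      = (if i = j + 1 then 1 else 0) - if i = j then 1 else 0 := by
  rw [tv_cartanDir ⟨hj, hk⟩]
  by_cases hk' : k + 1 ≤ N - 1
  · rw [tv_cartanDir ⟨by omega, by omega, hk'⟩]
    split_ifs <;> first | omega | norm_num
  · rw [tv, dif_neg (by omega)]
    split_ifs <;> first | omega | norm_num

end GaussGivental

open GaussGivental Finset

theorem commutator_diag_lower_general (N : ℕ) (μ : ℕ → ℂ)
    (f : ((Fin N × Fin N) → ℝ) → ℂ) (hf : ContDiff ℝ (⊤ : ℕ∞) f)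
    (i j : ℕ) (hj1 : 1 ≤ j)
    (T : (Fin N × Fin N) → ℝ) :
    Ed N μ i (fun S => El N μ j f S) T - El N μ j (fun S => Ed N μ i f S) T
      = (((if i = j + 1 then 1 else 0) : ℂ) - (if i = j then 1 else 0)) * El N μ j f T := by
  have hf2 : ContDiffAt ℝ 2 f T := hf.contDiffAt.of_le (WithTop.coe_le_coe.mpr le_top)
  rw [Ed_eq_firstOrderOp, El_eq_sum,
    firstOrderOp_sum_mul_sub _ hf2 fun k _ => (hasFDerivAt_lowerCoeff j k T).differentiableAt,
    mul_sum]
  refine sum_congr rfl fun k hk => ?_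
  rw [fderiv_lowerCoeff_apply, tv_cartanDir_sub_succ hj1 (mem_Icc.mp hk)]
  push_cast [apply_ite Complex.ofReal]
  ring

/-- the commutation relation
`[E_{i,i}, E_{j+1,j}] = (δ_{i,j+1} − δ_{i,j}) E_{j+1,j}` for the Gauss–Givental operators. -/
theorem commutator_diag_lower (N : ℕ) (hN : 2 ≤ N) (μ : ℕ → ℂ)
    (f : ((Fin N × Fin N) → ℝ) → ℂ) (hf : ContDiff ℝ (⊤ : ℕ∞) f)
    (i j : ℕ) (hi1 : 1 ≤ i) (hi2 : i ≤ N) (hj1 : 1 ≤ j) (hj2 : j ≤ N - 1)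
    (T : (Fin N × Fin N) → ℝ) :
    Ed N μ i (fun S => El N μ j f S) T - El N μ j (fun S => Ed N μ i f S) T
      = (((if i = j + 1 then 1 else 0) : ℂ) - (if i = j then 1 else 0)) * El N μ j f T :=
  commutator_diag_lower_general N μ f hf i j hj1 T
end
end

section
/- Let ξ_R^{(1)},…,ξ_R^{(N−1)} be complex numbers and define the function ψ_R of the variables T_{k,i} by ψ_R = exp{ Σ_{i=1}^{N−1} ξ_R^{(i)} Σ_{k=i}^{N−1} e^{T_{k,i} − T_{k+1,i+1}} } (with the convention T_{N,j} := 0). Then ψ_R is a Whittaker vector: for every i = 1,…,N−1 one has the pointwise identity E_{i,i+1} ψ_R = ξ_R^{(i)} · ψ_R, where E_{i,i+1} is the Gauss–Givental raising operator. -/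
/-!
Write `ψ_R = exp Φ`. The variable `T_{a,b}` occurs in exactly two terms of `Φ`, namely
`ξ^{(b)} e^{T_{a,b} - T_{a+1,b+1}}` and `ξ^{(b-1)} e^{T_{a-1,b-1} - T_{a,b}}`, so `∂ψ_R/∂T_{a,b}` is
`ψ_R` times their difference. Along the diagonal `a = N + n - i - 1` on which `E_{i,i+1}`
differentiates, the differences `∂/∂T_{a,n} - ∂/∂T_{a,n-1}` therefore telescope in `n`. After
exchanging the order of summation, each coefficient `e^{T_{N+k-i,k} - T_{N+k-i-1,k}}` merges the
surviving exponentials into horizontal ones `ξ^{(k)} e^{T_{N+k-i,k} - T_{N+k-i,k+1}}`, which telescope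
once more in `k`, leaving `ξ^{(i)} e^{T_{N,i} - T_{N,i+1}} ψ_R = ξ^{(i)} ψ_R`.
-/

noncomputable section

/-- The right Whittaker vector
`ψ_R = exp( Σ_{i=1}^{N−1} ξ_R^{(i)} Σ_{k=i}^{N−1} e^{T_{k,i} − T_{k+1,i+1}} )`. -/
def psiR (N : ℕ) (ξ : ℕ → ℂ) (T : (Fin N × Fin N) → ℝ) : ℂ :=
  Complex.exp (∑ i ∈ Finset.Icc 1 (N - 1), ξ i *
    ∑ k ∈ Finset.Icc i (N - 1), (Real.exp (tv N T k i - tv N T (k + 1) (i + 1)) : ℂ))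

open Finset

theorem Finset.sum_Icc_sub_pred {G : Type*} [AddCommGroup G] (g : ℕ → G) (k : ℕ) :
    ∑ n ∈ Icc 1 k, (g n - g (n - 1)) = g k - g 0 := by
  induction k with
  | zero => simp
  | succ k ih => rw [sum_Icc_succ_top (by omega), ih]; simp

theorem Finset.sum_Icc_tail_mul_sub_pred {R : Type*} [CommRing R] (x g : ℕ → R) (i : ℕ) :
    ∑ n ∈ Icc 1 i, (∑ k ∈ Icc n i, x k) * (g n - g (n - 1)) =
      ∑ k ∈ Icc 1 i, x k * (g k - g 0) := by
  simp only [sum_mul, ← sum_Icc_sub_pred g, mul_sum]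
  exact sum_comm' fun n k => by simp only [mem_Icc]; omega

theorem Finset.sum_Icc_sum_Icc_ite_eq {M : Type*} [AddCommMonoid M] (F : ℕ → ℕ → M)
    {a b m : ℕ} (hba : b ≤ a) (ham : a ≤ m) :
    ∑ j ∈ Icc 1 m, ∑ k ∈ Icc j m, (if k = a ∧ j = b then F k j else 0) =
      if 1 ≤ b then F a b else 0 := by
  simp_rw [and_comm (a := _ = a), ite_and]
  simp only [sum_ite_irrel, sum_const_zero, sum_ite_eq', mem_Icc]
  split_ifs <;> first | rfl | omega

def tvL (N k i : ℕ) : ((Fin N × Fin N) → ℝ) →L[ℝ] ℝ :=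
  if h : 1 ≤ i ∧ i ≤ k ∧ k ≤ N - 1 then
    ContinuousLinearMap.proj (⟨k - 1, by omega⟩, ⟨i - 1, by omega⟩)
  else 0

theorem hasFDerivAt_tv (N k i : ℕ) (T : (Fin N × Fin N) → ℝ) :
    HasFDerivAt (fun T => tv N T k i) (tvL N k i) T := by
  unfold tv tvL
  split_ifs
  · exact (ContinuousLinearMap.proj (R := ℝ) (φ := fun _ : Fin N × Fin N => ℝ) _).hasFDerivAt
  · exact hasFDerivAt_const 0 T

theorem tvL_single {N a b : ℕ} (hb : 1 ≤ b) (hba : b ≤ a) (ha : a ≤ N - 1)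
    (h₁ : a - 1 < N) (h₂ : b - 1 < N) (k i : ℕ) :
    tvL N k i (Pi.single (⟨a - 1, h₁⟩, ⟨b - 1, h₂⟩) 1) = if k = a ∧ i = b then 1 else 0 := by
  unfold tvL
  by_cases hki : 1 ≤ i ∧ i ≤ k ∧ k ≤ N - 1
  · rw [dif_pos hki, ContinuousLinearMap.proj_apply, Pi.single_apply]
    exact if_congr (by simp only [Prod.mk.injEq, Fin.mk.injEq]; omega) rfl rfl
  · rw [dif_neg hki, if_neg (by omega), zero_apply]

-- `ξ^{(j)} e^x` with `ξ^{(0)} := 0`, so that `pd_psiR` also covers the boundary cases `b ≤ 1`.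
def xiExp (ξ : ℕ → ℂ) (j : ℕ) (x : ℝ) : ℂ :=
  if 1 ≤ j then ξ j * (Real.exp x : ℂ) else 0

theorem ofReal_exp_mul_xiExp (ξ : ℕ → ℂ) (j : ℕ) (x y : ℝ) :
    (Real.exp x : ℂ) * xiExp ξ j y = xiExp ξ j (x + y) := by
  unfold xiExp
  split_ifs
  · rw [Real.exp_add]; push_cast; ring
  · simp

theorem hasFDerivAt_psiR (N : ℕ) (ξ : ℕ → ℂ) (T : (Fin N × Fin N) → ℝ) :
    HasFDerivAt (psiR N ξ) (psiR N ξ T • ∑ j ∈ Icc 1 (N - 1), ξ j • ∑ k ∈ Icc j (N - 1),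
      Complex.ofRealCLM.comp (Real.exp (tv N T k j - tv N T (k + 1) (j + 1)) •
        (tvL N k j - tvL N (k + 1) (j + 1)))) T := by
  refine HasFDerivAt.cexp (HasFDerivAt.fun_sum fun j _ => HasFDerivAt.const_mul
    (HasFDerivAt.fun_sum fun k _ => ?_) (ξ j))
  exact Complex.ofRealCLM.hasFDerivAt.comp T
    ((hasFDerivAt_tv N k j T).sub (hasFDerivAt_tv N (k + 1) (j + 1) T)).exp

theorem pd_psiR {N a b : ℕ} (ξ : ℕ → ℂ) (hba : b ≤ a) (ha : a ≤ N - 1)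
    (T : (Fin N × Fin N) → ℝ) :
    pd N (psiR N ξ) a b T = psiR N ξ T * (xiExp ξ b (tv N T a b - tv N T (a + 1) (b + 1)) -
      xiExp ξ (b - 1) (tv N T (a - 1) (b - 1) - tv N T a b)) := by
  rcases Nat.eq_zero_or_pos b with rfl | hb
  · simp [pd, xiExp]
  set F : ℕ → ℕ → ℂ := fun k j => ξ j * (Real.exp (tv N T k j - tv N T (k + 1) (j + 1)) : ℂ)
  rw [pd, dif_pos ⟨hb, hba, ha⟩, (hasFDerivAt_psiR N ξ T).fderiv, smul_apply, smul_eq_mul]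
  congr 1
  trans ∑ j ∈ Icc 1 (N - 1), ∑ k ∈ Icc j (N - 1), (if k = a ∧ j = b then F k j else 0) -
      ∑ j ∈ Icc 1 (N - 1), ∑ k ∈ Icc j (N - 1), (if k = a - 1 ∧ j = b - 1 then F k j else 0)
  · simp only [_root_.sum_apply, smul_apply, ContinuousLinearMap.comp_apply, sub_apply,
      tvL_single hb hba ha, Complex.ofRealCLM_apply, smul_eq_mul, ← sum_sub_distrib, mul_sum]
    refine sum_congr rfl fun j _ => sum_congr rfl fun k _ => ?_
    split_ifs <;> first | omega | simp [F]
  rw [sum_Icc_sum_Icc_ite_eq F hba ha,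
    sum_Icc_sum_Icc_ite_eq F (by omega : b - 1 ≤ a - 1) (by omega)]
  simp only [F, xiExp, Nat.sub_add_cancel hb, Nat.sub_add_cancel (hb.trans_le hba)]

theorem tv_self_left (N : ℕ) (T : (Fin N × Fin N) → ℝ) (j : ℕ) : tv N T N j = 0 :=
  dif_neg (by omega)

section RaisingOperator

variable (N : ℕ) (ξ : ℕ → ℂ) (i : ℕ) (T : (Fin N × Fin N) → ℝ)

def diagonalTerm (n : ℕ) : ℂ :=
  xiExp ξ n (tv N T (N + n - i - 1) n - tv N T (N + n - i) (n + 1)) -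
    xiExp ξ (n - 1) (tv N T (N + n - i - 1) (n - 1) - tv N T (N + n - i) n)

def horizontalTerm (k : ℕ) : ℂ :=
  xiExp ξ k (tv N T (N + k - i) k - tv N T (N + k - i) (k + 1))

theorem diagonalTerm_zero : diagonalTerm N ξ i T 0 = 0 := by
  simp [diagonalTerm, xiExp]

theorem horizontalTerm_zero : horizontalTerm N ξ i T 0 = 0 := by
  simp [horizontalTerm, xiExp]

variable {N i}

theorem horizontalTerm_self (hi : 1 ≤ i) : horizontalTerm N ξ i T i = ξ i := by
  simp [horizontalTerm, xiExp, hi, tv_self_left]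

theorem pd_psiR_sub_pd_psiR {n : ℕ} (hn : 1 ≤ n) (hni : n ≤ i) (hi : i ≤ N - 1) :
    pd N (psiR N ξ) (N + n - i - 1) n T - pd N (psiR N ξ) (N + n - i - 1) (n - 1) T =
      psiR N ξ T * diagonalTerm N ξ i T n - psiR N ξ T * diagonalTerm N ξ i T (n - 1) := by
  rw [pd_psiR ξ (by omega) (by omega), pd_psiR ξ (by omega) (by omega)]
  simp only [diagonalTerm, show N + n - i - 1 + 1 = N + n - i by omega, Nat.sub_add_cancel hn,
    show N + (n - 1) - i = N + n - i - 1 by omega]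
  ring

theorem ofReal_exp_mul_diagonalTerm {k : ℕ} (hk : 1 ≤ k) :
    (Real.exp (tv N T (N + k - i) k - tv N T (N + k - i - 1) k) : ℂ) * diagonalTerm N ξ i T k =
      horizontalTerm N ξ i T k - horizontalTerm N ξ i T (k - 1) := by
  simp only [diagonalTerm, horizontalTerm, mul_sub, ofReal_exp_mul_xiExp, Nat.sub_add_cancel hk,
    show N + (k - 1) - i = N + k - i - 1 by omega]
  congr 2 <;> ring

end RaisingOperator

theorem whittaker_vector_right_general (N : ℕ) (ξ : ℕ → ℂ)
    (i : ℕ) (hi1 : 1 ≤ i) (hi2 : i ≤ N - 1) (T : (Fin N × Fin N) → ℝ) :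
    Er N i (psiR N ξ) T = ξ i * psiR N ξ T := by
  set ψ := psiR N ξ T
  calc Er N i (psiR N ξ) T
      = ∑ n ∈ Icc 1 i, (∑ k ∈ Icc n i,
          (Real.exp (tv N T (N + k - i) k - tv N T (N + k - i - 1) k) : ℂ)) *
          (ψ * diagonalTerm N ξ i T n - ψ * diagonalTerm N ξ i T (n - 1)) :=
        sum_congr rfl fun n hn => by
          rw [mem_Icc] at hn
          rw [pd_psiR_sub_pd_psiR ξ T hn.1 hn.2 hi2]
    _ = ∑ k ∈ Icc 1 i, (Real.exp (tv N T (N + k - i) k - tv N T (N + k - i - 1) k) : ℂ) *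
          (ψ * diagonalTerm N ξ i T k - ψ * diagonalTerm N ξ i T 0) :=
        sum_Icc_tail_mul_sub_pred _ (fun n => ψ * diagonalTerm N ξ i T n) i
    _ = ∑ k ∈ Icc 1 i, (ψ * horizontalTerm N ξ i T k - ψ * horizontalTerm N ξ i T (k - 1)) :=
        sum_congr rfl fun k hk => by
          rw [diagonalTerm_zero, mul_zero, sub_zero, mul_left_comm,
            ofReal_exp_mul_diagonalTerm ξ T (mem_Icc.1 hk).1, mul_sub]
    _ = ψ * horizontalTerm N ξ i T i - ψ * horizontalTerm N ξ i T 0 :=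
        sum_Icc_sub_pred (fun k => ψ * horizontalTerm N ξ i T k) i
    _ = ξ i * ψ := by
      rw [horizontalTerm_self ξ T hi1, horizontalTerm_zero, mul_zero, sub_zero, mul_comm]

/-- `ψ_R` is a Whittaker vector for the Gauss–Givental raising operators:
`E_{i,i+1} ψ_R = ξ_R^{(i)} ψ_R` for `i = 1, …, N−1`. -/
theorem whittaker_vector_right (N : ℕ) (hN : 2 ≤ N) (ξ : ℕ → ℂ)
    (i : ℕ) (hi1 : 1 ≤ i) (hi2 : i ≤ N - 1) (T : (Fin N × Fin N) → ℝ) :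
    Er N i (psiR N ξ) T = ξ i * psiR N ξ T :=
  whittaker_vector_right_general N ξ i hi1 hi2 T
end
end

section
/- Let μ_1,…,μ_N and ξ_L^{(1)},…,ξ_L^{(N−1)} be complex numbers and define the function ψ_L of the variables T_{k,i} by ψ_L = exp{ Σ_{k=1}^{N−1} Σ_{i=1}^{k} (μ_k − μ_{k+1}) T_{k,i} + Σ_{i=1}^{N−1} ξ_L^{(i)} Σ_{k=1}^{N−i} e^{T_{k+i,k} − T_{k+i−1,k}} } (with the convention T_{N,j} := 0). Then ψ_L is a Whittaker vector: for every i = 1,…,N−1 one has the pointwise identity E_{i+1,i} ψ_L = ξ_L^{(N−i)} · ψ_L, where E_{i+1,i} is the Gauss–Givental lowering operator. -/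
noncomputable section

/-- The left Whittaker vector
`ψ_L = exp( Σ_{k=1}^{N−1} Σ_{i=1}^{k} (μ_k − μ_{k+1}) T_{k,i}
          + Σ_{i=1}^{N−1} ξ_L^{(i)} Σ_{k=1}^{N−i} e^{T_{k+i,k} − T_{k+i−1,k}} )`. -/
def psiL (N : ℕ) (μ : ℕ → ℂ) (ξ : ℕ → ℂ) (T : (Fin N × Fin N) → ℝ) : ℂ :=
  Complex.exp
    (∑ k ∈ Finset.Icc 1 (N - 1), ∑ i ∈ Finset.Icc 1 k,
        (μ k - μ (k + 1)) * (tv N T k i : ℂ)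
      + ∑ i ∈ Finset.Icc 1 (N - 1), ξ i *
        ∑ k ∈ Finset.Icc 1 (N - i), (Real.exp (tv N T (k + i) k - tv N T (k + i - 1) k) : ℂ))

/-!
Write `ψ_L = exp Φ` with `Φ = phiL`. The variable `T_{s,j}` occurs in the linear part of `Φ` with
coefficient `μ_s − μ_{s+1}`, and in exactly two exponential summands, both from column `j`: with
`c_{j,m} = chainTerm j m = ξ^{(m−j)} e^{T_{m,j} − T_{m−1,j}}` (and `c_{j,j} = 0`),
`∂Φ/∂T_{s,j} = (μ_s − μ_{s+1}) + c_{j,s} − c_{j,s+1}`.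
Summed over `s = j, …, k` this telescopes, and in the `k`-th term of `E_{i+1,i} ψ_L` the `μ`'s
cancel, leaving `ψ_L e^{T_{k,i} − T_{k+1,i+1}} (c_{i,k+1} − c_{i+1,k+1}) = ψ_L (h_{k+1} − h_k)`
with `h_m = lowerTerm i m = ξ^{(m−i)} e^{T_{m,i} − T_{m,i+1}}`. Telescoping over `k` gives
`ψ_L (h_N − h_i)`, which is `ξ^{(N−i)} ψ_L` because `T_{N,·} = 0`.
-/

open Finset

section Coordinates

variable {N : ℕ}

def tvCLM (N k i : ℕ) : ((Fin N × Fin N) → ℝ) →L[ℝ] ℝ :=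
  if h : 1 ≤ i ∧ i ≤ k ∧ k ≤ N - 1 then
    ContinuousLinearMap.proj (⟨k - 1, by omega⟩, ⟨i - 1, by omega⟩) else 0

lemma tvCLM_apply (T : (Fin N × Fin N) → ℝ) (k i : ℕ) : tvCLM N k i T = tv N T k i := by
  unfold tv tvCLM
  split <;> simp

def coordVec (N s j : ℕ) (h : 1 ≤ j ∧ j ≤ s ∧ s ≤ N - 1) : (Fin N × Fin N) → ℝ :=
  Pi.single ((⟨s - 1, by omega⟩ : Fin N), (⟨j - 1, by omega⟩ : Fin N)) 1

lemma tvCLM_coordVec {s j : ℕ} (h : 1 ≤ j ∧ j ≤ s ∧ s ≤ N - 1) (k i : ℕ) :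
    tvCLM N k i (coordVec N s j h) = if k = s ∧ i = j then 1 else 0 := by
  unfold tvCLM coordVec
  split_ifs with hki hks hks
  · simp [hks]
  · simp only [ContinuousLinearMap.proj_apply, Pi.single_apply, Prod.mk.injEq, Fin.mk.injEq]
    rw [if_neg (by omega)]
  · exact absurd (hks.1 ▸ hks.2 ▸ h) hki
  · rfl

lemma pd_eq_fderiv_coordVec (f : ((Fin N × Fin N) → ℝ) → ℂ) {s j : ℕ}
    (h : 1 ≤ j ∧ j ≤ s ∧ s ≤ N - 1) (T : (Fin N × Fin N) → ℝ) :
    pd N f s j T = fderiv ℝ f T (coordVec N s j h) :=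
  dif_pos h

lemma pd_eq_zero (f : ((Fin N × Fin N) → ℝ) → ℂ) {s j : ℕ}
    (h : ¬ (1 ≤ j ∧ j ≤ s ∧ s ≤ N - 1)) (T : (Fin N × Fin N) → ℝ) :
    pd N f s j T = 0 :=
  dif_neg h

end Coordinates

lemma sum_sum_ite_add_eq {M : Type*} [AddCommMonoid M] (N : ℕ) (F : ℕ → ℕ → M) {j m : ℕ}
    (hj : 1 ≤ j) :
    ∑ i ∈ Icc 1 (N - 1), ∑ k ∈ Icc 1 (N - i), (if k + i = m ∧ k = j then F i k else 0)
      = if j < m ∧ m ≤ N then F (m - j) j else 0 := by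
  split_ifs with hm
  · rw [sum_eq_single_of_mem (m - j) (by rw [mem_Icc]; omega),
      sum_eq_single_of_mem j (by rw [mem_Icc]; omega), if_pos (by omega)]
    · intro k _ hk
      rw [if_neg (by omega)]
    · intro i _ _
      exact sum_eq_zero fun k _ => if_neg (by omega)
  · refine sum_eq_zero fun i hi => sum_eq_zero fun k hk => if_neg ?_
    rw [mem_Icc] at hi hk
    omega

section Whittaker

variable (N : ℕ) (μ ξ : ℕ → ℂ) (T : (Fin N × Fin N) → ℝ)

def phiL : ℂ :=
  ∑ k ∈ Icc 1 (N - 1), ∑ i ∈ Icc 1 k, (μ k - μ (k + 1)) * (tv N T k i : ℂ)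
    + ∑ i ∈ Icc 1 (N - 1), ξ i *
      ∑ k ∈ Icc 1 (N - i), (Real.exp (tv N T (k + i) k - tv N T (k + i - 1) k) : ℂ)

lemma psiL_eq_cexp_phiL : psiL N μ ξ = fun T => Complex.exp (phiL N μ ξ T) := rfl

def phiLDeriv : ((Fin N × Fin N) → ℝ) →L[ℝ] ℂ :=
  ∑ k ∈ Icc 1 (N - 1), ∑ i ∈ Icc 1 k, (μ k - μ (k + 1)) • Complex.ofRealCLM.comp (tvCLM N k i)
    + ∑ i ∈ Icc 1 (N - 1), ξ i • ∑ k ∈ Icc 1 (N - i),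
      Complex.ofRealCLM.comp (Real.exp (tv N T (k + i) k - tv N T (k + i - 1) k) •
        (tvCLM N (k + i) k - tvCLM N (k + i - 1) k))

lemma hasFDerivAt_phiL : HasFDerivAt (phiL N μ ξ) (phiLDeriv N μ ξ T) T := by
  unfold phiL phiLDeriv
  refine .add (.fun_sum fun k _ => .fun_sum fun i _ => ?_)
    (.fun_sum fun i _ => (HasFDerivAt.fun_sum fun k _ => ?_).const_mul _)
  · simpa only [tvCLM_apply, ContinuousLinearMap.comp_apply, Complex.ofRealCLM_apply]
      using (Complex.ofRealCLM.comp (tvCLM N k i)).hasFDerivAt.const_mul _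
  · have hexp := Complex.ofRealCLM.hasFDerivAt.comp T
      (tvCLM N (k + i) k - tvCLM N (k + i - 1) k).hasFDerivAt.exp
    simpa only [sub_apply, tvCLM_apply, Function.comp_def, Complex.ofRealCLM_apply] using hexp

def chainTerm (j m : ℕ) : ℂ :=
  if j < m then ξ (m - j) * (Real.exp (tv N T m j - tv N T (m - 1) j) : ℂ) else 0

lemma phiLDeriv_coordVec {s j : ℕ} (h : 1 ≤ j ∧ j ≤ s ∧ s ≤ N - 1) :
    phiLDeriv N μ ξ T (coordVec N s j h)
      = μ s - μ (s + 1) + (chainTerm N ξ T j s - chainTerm N ξ T j (s + 1)) := by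
  obtain ⟨hj, hjs, hsN⟩ := h
  have hlinear : (∑ k ∈ Icc 1 (N - 1), ∑ i ∈ Icc 1 k,
      if k = s ∧ i = j then μ k - μ (k + 1) else 0) = μ s - μ (s + 1) := by
    rw [sum_eq_single_of_mem s (by rw [mem_Icc]; omega)
        fun k _ hk => sum_eq_zero fun i _ => if_neg (by tauto),
      sum_eq_single_of_mem j (by rw [mem_Icc]; omega) fun i _ hi => if_neg (by tauto),
      if_pos ⟨rfl, rfl⟩]
  have hshift : ∀ i ∈ Icc 1 (N - 1), ∑ k ∈ Icc 1 (N - i),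
      (if k + i - 1 = s ∧ k = j then
        ξ i * (Real.exp (tv N T (k + i) k - tv N T (k + i - 1) k) : ℂ) else 0)
        = ∑ k ∈ Icc 1 (N - i), (if k + i = s + 1 ∧ k = j then
          ξ i * (Real.exp (tv N T (k + i) k - tv N T (k + i - 1) k) : ℂ) else 0) :=
    fun i _ => sum_congr rfl fun k hk => by
      rw [mem_Icc] at hk
      split_ifs <;> first | rfl | omega
  simp only [phiLDeriv, add_apply, _root_.sum_apply, smul_apply, ContinuousLinearMap.comp_apply,
    sub_apply, tvCLM_coordVec, Complex.ofRealCLM_apply, smul_eq_mul, Complex.ofReal_sub,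
    apply_ite ((↑) : ℝ → ℂ), Complex.ofReal_one, Complex.ofReal_zero, mul_sub, mul_ite, mul_one,
    mul_zero, sum_sub_distrib, mul_sum]
  rw [hlinear, sum_congr rfl hshift, sum_sum_ite_add_eq N _ hj, sum_sum_ite_add_eq N _ hj]
  simp only [chainTerm, Nat.add_sub_cancel' hjs, Nat.add_sub_cancel' (hjs.trans s.le_succ)]
  split_ifs <;> first | rfl | omega

lemma pd_psiL {s j : ℕ} (h : 1 ≤ j ∧ j ≤ s ∧ s ≤ N - 1) :
    pd N (psiL N μ ξ) s j T
      = psiL N μ ξ T * (μ s - μ (s + 1) + (chainTerm N ξ T j s - chainTerm N ξ T j (s + 1))) := by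
  rw [pd_eq_fderiv_coordVec _ h, psiL_eq_cexp_phiL, (hasFDerivAt_phiL N μ ξ T).cexp.fderiv,
    smul_apply, phiLDeriv_coordVec, smul_eq_mul]

lemma sum_pd_psiL {j k : ℕ} (hj : 1 ≤ j) (hjk : j ≤ k + 1) (hk : k ≤ N - 1) :
    ∑ s ∈ Icc j k, pd N (psiL N μ ξ) s j T
      = psiL N μ ξ T * (μ j - μ (k + 1) - chainTerm N ξ T j (k + 1)) := by
  set g : ℕ → ℂ := fun s => -(μ s + chainTerm N ξ T j s)
  have hterm : ∀ s ∈ Icc j k,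
      pd N (psiL N μ ξ) s j T = psiL N μ ξ T * (g (s + 1) - g s) := fun s hs => by
    rw [mem_Icc] at hs
    rw [pd_psiL N μ ξ T (by omega)]
    ring
  have hdiag : chainTerm N ξ T j j = 0 := if_neg (lt_irrefl j)
  rw [sum_congr rfl hterm, ← mul_sum, ← Ico_add_one_right_eq_Icc, sum_Ico_sub g hjk]
  simp only [g, hdiag]
  ring

def lowerTerm (i m : ℕ) : ℂ :=
  if i < m then ξ (m - i) * (Real.exp (tv N T m i - tv N T m (i + 1)) : ℂ) else 0

lemma exp_mul_chainTerm {i k : ℕ} (hik : i ≤ k) :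
    (Real.exp (tv N T k i - tv N T (k + 1) (i + 1)) : ℂ) * chainTerm N ξ T i (k + 1)
      = lowerTerm N ξ T i (k + 1) := by
  simp only [chainTerm, lowerTerm, if_pos (Nat.lt_succ_of_le hik), Nat.add_sub_cancel]
  rw [mul_left_comm, ← Complex.ofReal_mul, ← Real.exp_add]
  ring_nf

lemma exp_mul_chainTerm_succ (i k : ℕ) :
    (Real.exp (tv N T k i - tv N T (k + 1) (i + 1)) : ℂ) * chainTerm N ξ T (i + 1) (k + 1)
      = lowerTerm N ξ T i k := by
  simp only [chainTerm, lowerTerm, Nat.add_lt_add_iff_right, Nat.add_sub_add_right,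
    Nat.add_sub_cancel]
  split_ifs
  · rw [mul_left_comm, ← Complex.ofReal_mul, ← Real.exp_add]
    ring_nf
  · exact mul_zero _

lemma lowerTerm_self (i : ℕ) : lowerTerm N ξ T i i = 0 :=
  if_neg (lt_irrefl i)

lemma lowerTerm_top {i : ℕ} (hi : i < N) : lowerTerm N ξ T i N = ξ (N - i) := by
  have htop : ∀ j, tv N T N j = 0 := fun j => dif_neg (by omega)
  simp [lowerTerm, hi, htop]

lemma El_summand_psiL {i k : ℕ} (hi : 1 ≤ i) (hik : i ≤ k) (hk : k ≤ N - 1) :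
    (Real.exp (tv N T k i - tv N T (k + 1) (i + 1)) : ℂ) *
        ((μ i - μ (i + 1)) * psiL N μ ξ T
          + ∑ s ∈ Icc i k, (pd N (psiL N μ ξ) s (i + 1) T - pd N (psiL N μ ξ) s i T))
      = psiL N μ ξ T * (lowerTerm N ξ T i (k + 1) - lowerTerm N ξ T i k) := by
  have hdrop : ∑ s ∈ Icc i k, pd N (psiL N μ ξ) s (i + 1) T
      = ∑ s ∈ Icc (i + 1) k, pd N (psiL N μ ξ) s (i + 1) T := by
    rw [← Ioc_insert_left hik, sum_insert left_notMem_Ioc, pd_eq_zero _ (by omega) T, zero_add,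
      Icc_add_one_left_eq_Ioc]
  rw [sum_sub_distrib, hdrop, sum_pd_psiL N μ ξ T (by omega) (by omega) hk,
    sum_pd_psiL N μ ξ T hi (by omega) hk, ← exp_mul_chainTerm N ξ T hik,
    ← exp_mul_chainTerm_succ N ξ T i k]
  ring

end Whittaker

theorem whittaker_vector_left_general (N : ℕ) (μ : ℕ → ℂ) (ξ : ℕ → ℂ)
    (i : ℕ) (hi1 : 1 ≤ i) (hi2 : i ≤ N - 1) (T : (Fin N × Fin N) → ℝ) :
    El N μ i (psiL N μ ξ) T = ξ (N - i) * psiL N μ ξ T := by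
  have hsummand := fun k (hk : k ∈ Icc i (N - 1)) =>
    El_summand_psiL N μ ξ T hi1 (mem_Icc.1 hk).1 (mem_Icc.1 hk).2
  rw [El, sum_congr rfl hsummand, ← mul_sum, ← Ico_add_one_right_eq_Icc,
    sum_Ico_sub _ (by omega), Nat.sub_add_cancel (by omega), lowerTerm_top N ξ T (by omega),
    lowerTerm_self, sub_zero, mul_comm]

/-- `ψ_L` is a Whittaker vector for the Gauss–Givental lowering operators:
`E_{i+1,i} ψ_L = ξ_L^{(N−i)} ψ_L` for `i = 1, …, N−1`. -/
theorem whittaker_vector_left (N : ℕ) (hN : 2 ≤ N) (μ : ℕ → ℂ) (ξ : ℕ → ℂ)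
    (i : ℕ) (hi1 : 1 ≤ i) (hi2 : i ≤ N - 1) (T : (Fin N × Fin N) → ℝ) :
    El N μ i (psiL N μ ξ) T = ξ (N - i) * psiL N μ ξ T :=
  whittaker_vector_left_general N μ ξ i hi1 hi2 T
end
end

section
/- Let N ≥ 2 and let T_{k,i} (1 ≤ i ≤ k ≤ N−1) be real numbers, with the convention T_{N,i} := 0. For 2 ≤ k ≤ N define the N×N real matrices U_k = Σ_{i=1}^{k} e^{T_{k,i}} e_{i,i} + Σ_{i=k+1}^{N} e_{i,i} and Ũ_k = Σ_{i=1}^{k} e^{T_{k,i}} e_{i,i} + Σ_{i=k+1}^{N} e_{i,i} + Σ_{i=1}^{k−1} e^{T_{k−1,i}} e_{i,i+1}. Then the Gauss–Givental product equals the product of elementary Jacobi-type factors: Ũ_2 U_2^{−1} Ũ_3 U_3^{−1} ⋯ Ũ_{N−1} U_{N−1}^{−1} Ũ_N = ∏_{k=1}^{N−1} ( I + Σ_{i=1}^{k} e^{T_{k,i} − T_{k+1,i+1}} e_{i,i+1} ), where both products are taken left to right in increasing index. -/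
noncomputable section

/-- The diagonal matrix `U_k = Σ_{i=1}^{k} e^{T_{k,i}} e_{i,i} + Σ_{i=k+1}^{N} e_{i,i}`
(indices are 1-based; `Fin N` index `a` corresponds to `i = a+1`). -/
def Umat (N : ℕ) (T : ℕ → ℕ → ℝ) (k : ℕ) : Matrix (Fin N) (Fin N) ℝ :=
  Matrix.diagonal fun a => if a.val + 1 ≤ k then Real.exp (T k (a.val + 1)) else 1

/-- The matrix `Ũ_k = U_k + Σ_{i=1}^{k−1} e^{T_{k−1,i}} e_{i,i+1}`. -/
def Utilde (N : ℕ) (T : ℕ → ℕ → ℝ) (k : ℕ) : Matrix (Fin N) (Fin N) ℝ :=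
  Umat N T k +
    Matrix.of fun a b =>
      if b.val = a.val + 1 ∧ a.val + 1 ≤ k - 1 then Real.exp (T (k - 1) (a.val + 1)) else 0

/-- The Jacobi-type factor `I + Σ_{i=1}^{k} e^{T_{k,i} − T_{k+1,i+1}} e_{i,i+1}`. -/
def Jmat (N : ℕ) (T : ℕ → ℕ → ℝ) (k : ℕ) : Matrix (Fin N) (Fin N) ℝ :=
  1 + Matrix.of fun a b =>
    if b.val = a.val + 1 ∧ a.val + 1 ≤ k then
      Real.exp (T k (a.val + 1) - T (k + 1) (a.val + 2)) else 0

lemma Umat_isUnit_det (N : ℕ) (T : ℕ → ℕ → ℝ) (k : ℕ) : IsUnit (Umat N T k).det := by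
  rw [Umat, Matrix.det_diagonal, isUnit_iff_ne_zero]
  exact Finset.prod_ne_zero_iff.2 fun i _ => by
    split <;> [exact (Real.exp_pos _).ne'; exact one_ne_zero]

lemma factor (N : ℕ) (T : ℕ → ℕ → ℝ) (m : ℕ) :
    Utilde N T (m + 1) * (Umat N T (m + 1))⁻¹ = Jmat N T m := by
  have h : Utilde N T (m + 1) = Jmat N T m * Umat N T (m + 1) := by
    ext a b
    rw [Utilde, Jmat, Umat, Matrix.mul_diagonal, Matrix.add_apply, Matrix.add_apply,
      Matrix.diagonal_apply, Matrix.one_apply, Matrix.of_apply, Matrix.of_apply]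
    simp only [Nat.add_sub_cancel]
    by_cases hab : a = b
    · subst hab
      have h1 : ¬ (a.val = a.val + 1 ∧ a.val + 1 ≤ m) := by omega
      have h2 : ¬ (a.val = a.val + 1 ∧ a.val + 1 ≤ m + 1 - 1) := by omega
      simp [h1, h2]
    · simp only [hab, if_neg hab, if_false, zero_add, add_mul, zero_mul]
      by_cases hb : b.val = a.val + 1 ∧ a.val + 1 ≤ m
      · obtain ⟨hb1, hb2⟩ := hb
        have h3 : b.val + 1 ≤ m + 1 := by omega
        rw [if_pos ⟨hb1, hb2⟩, if_pos ⟨hb1, hb2⟩, if_pos h3, ← Real.exp_add, hb1]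
        ring_nf
      · rw [if_neg hb, if_neg hb, zero_mul]
  rw [h, mul_assoc, Matrix.mul_nonsing_inv _ (Umat_isUnit_det N T (m + 1)), mul_one]

lemma utildeN (N : ℕ) (hN : 2 ≤ N) (T : ℕ → ℕ → ℝ) (hT : ∀ i, T N i = 0) :
    Utilde N T N = Jmat N T (N - 1) := by
  have hN1 : N - 1 + 1 = N := by omega
  ext a b
  rw [Utilde, Jmat, Umat, Matrix.add_apply, Matrix.add_apply, Matrix.diagonal_apply,
    Matrix.one_apply, Matrix.of_apply, Matrix.of_apply, hN1]
  have ha : a.val + 1 ≤ N := a.isLt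
  rw [if_pos ha, hT, Real.exp_zero]
  by_cases hb : b.val = a.val + 1 ∧ a.val + 1 ≤ N - 1
  · rw [if_pos hb, if_pos hb, hT, sub_zero]
  · rw [if_neg hb, if_neg hb]

/-- the Gauss–Givental product equals the product of elementary
Jacobi-type factors:
`Ũ_2 U_2⁻¹ Ũ_3 U_3⁻¹ ⋯ Ũ_{N−1} U_{N−1}⁻¹ Ũ_N
  = ∏_{k=1}^{N−1} ( I + Σ_{i=1}^{k} e^{T_{k,i} − T_{k+1,i+1}} e_{i,i+1} )`,
both products taken left to right in increasing index, under the convention `T_{N,i} = 0`. -/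
theorem gauss_givental_factorization (N : ℕ) (hN : 2 ≤ N)
    (T : ℕ → ℕ → ℝ) (hT : ∀ i, T N i = 0) :
    (((List.range' 2 (N - 2)).map fun k => Utilde N T k * (Umat N T k)⁻¹).prod) * Utilde N T N
      = ((List.range' 1 (N - 1)).map fun k => Jmat N T k).prod := by
  have hmap : ((List.range' 2 (N - 2)).map fun k => Utilde N T k * (Umat N T k)⁻¹)
      = (List.range' 1 (N - 2)).map fun k => Jmat N T k := by
    rw [List.range'_eq_map_range, List.range'_eq_map_range, List.map_map, List.map_map]
    refine List.map_congr_left fun j _ => ?_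
    show Utilde N T (2 + j) * (Umat N T (2 + j))⁻¹ = Jmat N T (1 + j)
    have : 2 + j = (1 + j) + 1 := by omega
    rw [this, factor]
  have hcat : List.range' 1 (N - 1) = List.range' 1 (N - 2) ++ [N - 1] := by
    have h1 : N - 1 = (N - 2) + 1 := by omega
    rw [h1, List.range'_1_concat]
    congr 1
    simp; omega
  rw [hmap, hcat, List.map_append, List.prod_append, utildeN N hN T hT]
  simp
end
end

section
/- Let N ≥ 3, let R = ℝ[ε]/(ε²) be the ring of dual numbers, let y_1,…,y_{N−1} be nonzero real numbers, and let 2 ≤ j ≤ N−1. Define y'_{j−1} = y_{j−1} − (y_{j−1}/y_j)ε, y'_j = y_j + ε, and y'_i = y_i for i ≠ j−1, j. Then in the N×N matrices over R one has the exact identity ( I + Σ_{i=1}^{N−1} y_i e_{i,i+1} ) ( I + ε e_{j,j+1} ) = ( I + (y_{j−1}/y_j) ε e_{j−1,j} ) ( I + Σ_{i=1}^{N−1} y'_i e_{i,i+1} ). -/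
/-!
Write `S`, `S'` for the two superdiagonal parts and `E`, `E'` for the two elementary
`ε`-matrices, so that the sides are `(1 + S)(1 + E) = 1 + (S + E) + S E` and
`(1 + E')(1 + S') = 1 + (E' + S') + E' S'`. The sums agree because `S'` differs from `S` by
exactly `E - E'`, and both products equal `y_{j-1} ε e_{j-1,j+1}`: on the right the factor
`y_j + ε` of `S'` is hit by `(y_{j-1}/y_j) ε`, and the `ε²` term vanishes.
-/

noncomputable section

/-- The superdiagonal matrix `Σ_{i=1}^{N−1} c_i e_{i,i+1}` over the dual numbers
(the entry at 0-based position `(a, a+1)` is `c_{a+1}`). -/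
def sdiagD (N : ℕ) (c : ℕ → DualNumber ℝ) : Matrix (Fin N) (Fin N) (DualNumber ℝ) :=
  Matrix.of fun a b => if b.val = a.val + 1 then c (a.val + 1) else 0

theorem one_add_mul_one_add_eq_of_add_eq_of_mul_eq {R : Type*} [Semiring R] {a b c d : R}
    (hadd : a + b = c + d) (hmul : a * b = c * d) : (1 + a) * (1 + b) = (1 + c) * (1 + d) := by
  calc (1 + a) * (1 + b) = 1 + (a + b) + a * b := by noncomm_ring
    _ = 1 + (c + d) + c * d := by rw [hadd, hmul]
    _ = (1 + c) * (1 + d) := by noncomm_ring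

theorem DualNumber.algebraMap_div_mul_eps_mul_add_eps {K : Type*} [Field K] (x : K) {y : K}
    (hy : y ≠ 0) :
    algebraMap K (DualNumber K) (x / y) * DualNumber.eps
        * (algebraMap K (DualNumber K) y + DualNumber.eps)
      = algebraMap K (DualNumber K) x * DualNumber.eps := by
  rw [mul_add, mul_assoc _ DualNumber.eps DualNumber.eps, DualNumber.eps_mul_eps, mul_zero,
    add_zero, mul_right_comm, ← map_mul, div_mul_cancel₀ _ hy]

section sdiagD

variable {N : ℕ}

theorem sdiagD_add (c d : ℕ → DualNumber ℝ) : sdiagD N (c + d) = sdiagD N c + sdiagD N d := by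
  ext a b : 1
  simp only [sdiagD, Matrix.of_apply, Matrix.add_apply, Pi.add_apply]
  split_ifs <;> simp

theorem sdiagD_pi_single {p q : Fin N} (hpq : q.val = p.val + 1) (v : DualNumber ℝ) :
    sdiagD N (Pi.single q.val v) = Matrix.single p q v := by
  ext a b : 1
  simp only [sdiagD, Matrix.of_apply, Matrix.single_apply, Pi.single_apply, Fin.ext_iff]
  split_ifs <;> first | rfl | omega

theorem sdiagD_mul_single (c : ℕ → DualNumber ℝ) {r p : Fin N} (hrp : p.val = r.val + 1)
    (q : Fin N) (d : DualNumber ℝ) :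
    sdiagD N c * Matrix.single p q d = Matrix.single r q (c p * d) := by
  ext a b : 1
  by_cases hb : b = q
  · subst hb
    simp only [Matrix.mul_single_apply_same, sdiagD, Matrix.of_apply, Matrix.single_apply,
      Fin.ext_iff]
    split_ifs <;> simp_all
  · simp [Matrix.mul_single_apply_of_ne _ _ _ _ _ hb, Ne.symm hb]

theorem single_mul_sdiagD (c : ℕ → DualNumber ℝ) (p : Fin N) {q r : Fin N}
    (hqr : r.val = q.val + 1) (d : DualNumber ℝ) :
    Matrix.single p q d * sdiagD N c = Matrix.single p r (d * c r) := by
  ext a b : 1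
  by_cases ha : a = p
  · subst ha
    simp only [Matrix.single_mul_apply_same, sdiagD, Matrix.of_apply, Matrix.single_apply,
      Fin.ext_iff]
    split_ifs <;> simp_all
  · simp [Matrix.single_mul_apply_of_ne _ _ _ _ _ ha, Ne.symm ha]

end sdiagD

/-- the exact identity over the dual numbers `ℝ[ε]/(ε²)`:
`(I + Σ_{i=1}^{N−1} y_i e_{i,i+1})(I + ε e_{j,j+1})
  = (I + (y_{j−1}/y_j) ε e_{j−1,j})(I + Σ_{i=1}^{N−1} y'_i e_{i,i+1})`,
where `y'_{j−1} = y_{j−1} − (y_{j−1}/y_j) ε`, `y'_j = y_j + ε` and `y'_i = y_i` otherwise. -/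
theorem jacobi_dual_number_commutation (N : ℕ)
    (y : ℕ → ℝ) (hy : ∀ i, 1 ≤ i → i ≤ N - 1 → y i ≠ 0)
    (j : ℕ) (hj1 : 2 ≤ j) (hj2 : j ≤ N - 1) :
    ((1 : Matrix (Fin N) (Fin N) (DualNumber ℝ))
        + sdiagD N fun i => algebraMap ℝ (DualNumber ℝ) (y i)) *
      (1 + Matrix.single (⟨j - 1, by omega⟩ : Fin N) (⟨j, by omega⟩ : Fin N)
            DualNumber.eps)
    = (1 + Matrix.single (⟨j - 2, by omega⟩ : Fin N) (⟨j - 1, by omega⟩ : Fin N)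
            (algebraMap ℝ (DualNumber ℝ) (y (j - 1) / y j) * DualNumber.eps)) *
      (1 + sdiagD N fun i =>
        if i = j - 1 then
          algebraMap ℝ (DualNumber ℝ) (y (j - 1))
            - algebraMap ℝ (DualNumber ℝ) (y (j - 1) / y j) * DualNumber.eps
        else if i = j then algebraMap ℝ (DualNumber ℝ) (y j) + DualNumber.eps
        else algebraMap ℝ (DualNumber ℝ) (y i)) := by
  apply one_add_mul_one_add_eq_of_add_eq_of_mul_eq
  · rw [← sdiagD_pi_single (p := ⟨j - 1, by omega⟩) (q := ⟨j, by omega⟩) (by simp; omega),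
      ← sdiagD_pi_single (p := ⟨j - 2, by omega⟩) (q := ⟨j - 1, by omega⟩) (by simp; omega),
      ← sdiagD_add, ← sdiagD_add]
    congr 1
    funext i
    simp only [Pi.add_apply, Pi.single_apply]
    split_ifs <;> subst_vars <;> first | omega | ring
  · rw [sdiagD_mul_single (r := ⟨j - 2, by omega⟩) _ (by simp; omega),
      single_mul_sdiagD (r := ⟨j, by omega⟩) _ _ (by simp; omega),
      if_neg (show j ≠ j - 1 by omega), if_pos rfl,
      DualNumber.algebraMap_div_mul_eps_mul_add_eps _ (hy j (by omega) hj2)]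
end
end

section
/- Let N ≥ 2, let y_{k,i} be real numbers for 1 ≤ i ≤ k ≤ N−1, and let x = ∏_{k=1}^{N−1} ( I + Σ_{i=1}^{k} y_{k,i} e_{i,i+1} ), the product taken left to right in increasing k. Then the first superdiagonal entries of x are given by x_{i,i+1} = Σ_{k=i}^{N−1} y_{k,i} for every i = 1,…,N−1. -/
noncomputable section

/-- The superdiagonal matrix `Σ_{i=1}^{N−1} c_i e_{i,i+1}`
(the entry at 0-based position `(a, a+1)` is `c_{a+1}`). -/
def sdiagR (N : ℕ) (c : ℕ → ℝ) : Matrix (Fin N) (Fin N) ℝ :=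
  Matrix.of fun a b => if b.val = a.val + 1 then c (a.val + 1) else 0

/-- The matrix `x = ∏_{k=1}^{N−1} (I + Σ_{i=1}^{k} y_{k,i} e_{i,i+1})`,
product taken left to right in increasing `k`. -/
def xprod (N : ℕ) (y : ℕ → ℕ → ℝ) : Matrix (Fin N) (Fin N) ℝ :=
  (((List.range' 1 (N - 1)).map fun k =>
    (1 : Matrix (Fin N) (Fin N) ℝ) + sdiagR N fun i => if i ≤ k then y k i else 0)).prod

lemma sdiag_mul (N : ℕ) (c : ℕ → ℝ) (M : Matrix (Fin N) (Fin N) ℝ) (a b : Fin N) :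
    (sdiagR N c * M) a b =
      if h : a.val + 1 < N then c (a.val + 1) * M ⟨a.val + 1, h⟩ b else 0 := by
  rw [Matrix.mul_apply]
  split
  · rename_i h
    rw [Finset.sum_eq_single (⟨a.val + 1, h⟩ : Fin N)]
    · simp [sdiagR]
    · intro c' _ hc'
      have : ¬ (c'.val = a.val + 1) := fun hh => hc' (Fin.ext hh)
      simp [sdiagR, this]
    · simp
  · rename_i h
    apply Finset.sum_eq_zero
    intro c' _
    have : ¬ (c'.val = a.val + 1) := fun hh => h (hh ▸ c'.isLt)
    simp [sdiagR, this]

lemma key (N : ℕ) (y : ℕ → ℕ → ℝ) (ℓ : List ℕ) :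
    (∀ a b : Fin N, b.val < a.val →
      ((ℓ.map fun k => (1 : Matrix (Fin N) (Fin N) ℝ) +
        sdiagR N fun i => if i ≤ k then y k i else 0)).prod a b = 0) ∧
    (∀ a : Fin N,
      ((ℓ.map fun k => (1 : Matrix (Fin N) (Fin N) ℝ) +
        sdiagR N fun i => if i ≤ k then y k i else 0)).prod a a = 1) ∧
    (∀ (a : Fin N) (h : a.val + 1 < N),
      ((ℓ.map fun k => (1 : Matrix (Fin N) (Fin N) ℝ) +
        sdiagR N fun i => if i ≤ k then y k i else 0)).prod a ⟨a.val + 1, h⟩ =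
        (ℓ.map fun k => if a.val + 1 ≤ k then y k (a.val + 1) else 0).sum) := by
  induction ℓ with
  | nil => refine ⟨?_, ?_, ?_⟩ <;> intros <;> simp_all [Matrix.one_apply, Fin.ext_iff] <;> omega
  | cons k t ih =>
    obtain ⟨ih0, ih1, ih2⟩ := ih
    have hexp : ∀ a b : Fin N,
        ((((k :: t).map fun k => (1 : Matrix (Fin N) (Fin N) ℝ) +
          sdiagR N fun i => if i ≤ k then y k i else 0)).prod) a b =
        ((t.map fun k => (1 : Matrix (Fin N) (Fin N) ℝ) +
          sdiagR N fun i => if i ≤ k then y k i else 0)).prod a b +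
        (if h : a.val + 1 < N then
          (if a.val + 1 ≤ k then y k (a.val + 1) else 0) *
          ((t.map fun k => (1 : Matrix (Fin N) (Fin N) ℝ) +
            sdiagR N fun i => if i ≤ k then y k i else 0)).prod ⟨a.val + 1, h⟩ b
         else 0) := by
      intro a b
      rw [List.map_cons, List.prod_cons, Matrix.add_mul, Matrix.one_mul, Matrix.add_apply,
        sdiag_mul]
    refine ⟨?_, ?_, ?_⟩
    · intro a b hab
      rw [hexp]
      rw [ih0 a b hab]
      split
      · rw [ih0 _ b (by simpa using Nat.lt_succ_of_lt hab)]; simp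
      · simp
    · intro a
      rw [hexp, ih1 a]
      split
      · rw [ih0 _ a (by simp)]; simp
      · simp
    · intro a h
      rw [hexp, ih2 a h]
      rw [dif_pos h, ih1]
      simp [add_comm]

/-- the first superdiagonal entries of
`x = ∏_{k=1}^{N−1}(I + Σ_{i=1}^{k} y_{k,i} e_{i,i+1})` are `x_{i,i+1} = Σ_{k=i}^{N−1} y_{k,i}`. -/
theorem xprod_superdiagonal (N : ℕ) (hN : 2 ≤ N) (y : ℕ → ℕ → ℝ)
    (a : Fin N) (h : a.val + 1 < N) :
    xprod N y a ⟨a.val + 1, h⟩ = ∑ k ∈ Finset.Icc (a.val + 1) (N - 1), y k (a.val + 1) := by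
  have := (key N y (List.range' 1 (N - 1))).2.2 a h
  rw [xprod, this]
  have h1 : ∀ (n m : ℕ) (f : ℕ → ℝ),
      ((List.range' m n).map f).sum = ∑ k ∈ Finset.Ico m (m + n), f k := by
    intro n
    induction n with
    | zero => intro m f; simp
    | succ n ih =>
      intro m f
      rw [List.range'_succ, List.map_cons, List.sum_cons, ih,
        Finset.sum_eq_sum_Ico_succ_bot (by omega : m < m + (n + 1)),
        show m + (n + 1) = m + 1 + n by omega]
  rw [h1]
  rw [← Finset.sum_filter]
  congr 1
  ext k
  simp only [Finset.mem_filter, Finset.mem_Ico, Finset.mem_Icc]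
  omega
end
end

section
/- Let N ≥ 2, let y_{k,i} be nonzero real numbers for 1 ≤ i ≤ k ≤ N−1 with the convention y_{N,k} := 1, let x = ∏_{k=1}^{N−1} ( I + Σ_{i=1}^{k} y_{k,i} e_{i,i+1} ) (product left to right in increasing k), and let w_0 be the N×N matrix with (w_0)_{i,j} = 1 if i + j = N + 1 and 0 otherwise. Then for every i = 1,…,N−1 one has Δ_{i,i+1}(x w_0^{−1}) = Δ_i(x w_0^{−1}) · Σ_{k=i}^{N−1} ∏_{m=k}^{N−1} ( y_{m+1,m−i+1} / y_{m,m−i+1} ). -/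
noncomputable section

/-- The longest-permutation matrix `w₀`, with `(w₀)_{i,j} = 1` iff `i + j = N + 1` (1-based). -/
def w0 (N : ℕ) : Matrix (Fin N) (Fin N) ℝ :=
  Matrix.of fun i j => if i.val + j.val + 2 = N + 1 then 1 else 0

/-- `Δ_i(M)`: the leading principal `i×i` minor of an `N×N` matrix `M`
(meaningful for `i ≤ N`; out-of-range entries are read as `0`). -/
def leadingMinor (N : ℕ) (M : Matrix (Fin N) (Fin N) ℝ) (i : ℕ) : ℝ :=
  Matrix.det (Matrix.of fun a b : Fin i =>
    if h : a.val < N ∧ b.val < N then M ⟨a.val, h.1⟩ ⟨b.val, h.2⟩ else 0)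

/-- `Δ_{i,i+1}(M)`: the determinant of the `i×i` submatrix of `M` formed by rows `1,…,i`
and columns `1,…,i−1,i+1` (the leading minor with the `i`-th column replaced by the
`(i+1)`-th column). Out-of-range entries are read as `0`. -/
def leadingSwapMinor (N : ℕ) (M : Matrix (Fin N) (Fin N) ℝ) (i : ℕ) : ℝ :=
  Matrix.det (Matrix.of fun a b : Fin i =>
    if h : a.val < N ∧ (if b.val + 1 = i then i else b.val) < N then
      M ⟨a.val, h.1⟩ ⟨if b.val + 1 = i then i else b.val, h.2⟩ else 0)

namespace SwapMinor

def Umat (n : ℕ) (c : ℕ → ℝ) : Matrix (Fin n) (Fin n) ℝ :=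
  Matrix.of fun a b => if a = b then 1 else if b.val = a.val + 1 then c b.val else 0

lemma Umat_det (n : ℕ) (c : ℕ → ℝ) : (Umat n c).det = 1 := by
  rw [Matrix.det_of_upperTriangular]
  · simp [Umat]
  · intro a b hba
    simp only [id] at hba
    simp only [Umat, Matrix.of_apply]
    have h1 : ¬ (a = b) := by intro h; subst h; exact lt_irrefl _ hba
    have h2 : ¬ (b.val = a.val + 1) := by have := Fin.lt_iff_val_lt_val.mp hba; omega
    rw [if_neg h1, if_neg h2]

lemma mul_Umat_apply (n : ℕ) (M : Matrix (Fin n) (Fin n) ℝ) (c : ℕ → ℝ) (a b : Fin n) :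
    (M * Umat n c) a b
      = M a b + (if 1 ≤ b.val then c b.val else 0) * M a ⟨b.val - 1, by omega⟩ := by
  rw [Matrix.mul_apply]
  set e : Fin n := ⟨b.val - 1, by omega⟩ with he
  have key : ∀ x : Fin n, M a x * Umat n c x b
      = (if x = b then M a b else 0)
        + (if x = e then ((if 1 ≤ b.val then c b.val else 0) * M a x) else 0) := by
    intro x
    simp only [Umat, Matrix.of_apply]
    by_cases hxb : x = b
    · subst hxb
      rw [if_pos rfl, if_pos rfl, mul_one]
      by_cases hxe : x = e
      · have hb0 : x.val = 0 := by have := Fin.ext_iff.mp hxe; simp [he] at this; omega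
        rw [if_pos hxe, if_neg (by omega), zero_mul, add_zero]
      · rw [if_neg hxe, add_zero]
    · rw [if_neg hxb, if_neg hxb, zero_add]
      by_cases hx1 : b.val = x.val + 1
      · rw [if_pos hx1, if_pos (by apply Fin.ext; simp [he]; omega), if_pos (by omega)]
        ring
      · rw [if_neg hx1, if_neg (by intro h; have := Fin.ext_iff.mp h; simp [he] at this; omega : ¬ x = e)]
        ring
  rw [Finset.sum_congr rfl (fun x _ => key x), Finset.sum_add_distrib]
  congr 1
  · simp
  · rw [Finset.sum_ite_eq' Finset.univ e (fun x => (if 1 ≤ b.val then c b.val else 0) * M a x)]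
    simp


/-- partial product of the first `r` factors -/
def Ap (N : ℕ) (y : ℕ → ℕ → ℝ) (r : ℕ) : Matrix (Fin N) (Fin N) ℝ :=
  (((List.range' 1 r).map fun k =>
    (1 : Matrix (Fin N) (Fin N) ℝ) + sdiagR N fun i => if i ≤ k then y k i else 0)).prod

lemma xprod_eq_Ap (N : ℕ) (y : ℕ → ℕ → ℝ) : xprod N y = Ap N y (N - 1) := rfl

lemma gfac_eq_Umat (N k : ℕ) (y : ℕ → ℕ → ℝ) :
    (1 : Matrix (Fin N) (Fin N) ℝ) + sdiagR N (fun i => if i ≤ k then y k i else 0)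
      = Umat N (fun l => if l ≤ k then y k l else 0) := by
  ext a b
  simp only [Matrix.add_apply, Matrix.one_apply, sdiagR, Umat, Matrix.of_apply]
  by_cases hab : a = b
  · subst hab
    rw [if_pos rfl, if_pos rfl, if_neg (by omega), add_zero]
  · rw [if_neg hab, if_neg hab, zero_add]
    by_cases h : b.val = a.val + 1
    · rw [if_pos h, if_pos h, h]
    · rw [if_neg h, if_neg h]

lemma Ap_succ (N : ℕ) (y : ℕ → ℕ → ℝ) (r : ℕ) :
    Ap N y (r + 1) = Ap N y r * Umat N (fun l => if l ≤ r + 1 then y (r + 1) l else 0) := by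
  rw [Ap, List.range'_concat, List.map_append, List.prod_append]
  simp only [List.map_cons, List.map_nil, List.prod_cons, List.prod_nil, mul_one, gfac_eq_Umat]
  norm_num [Nat.add_comm 1 r]
  congr 1
  rw [Ap]
  simp [gfac_eq_Umat]

lemma Ap_entry_succ (N : ℕ) (y : ℕ → ℕ → ℝ) (r : ℕ) (a b : Fin N) :
    Ap N y (r + 1) a b = Ap N y r a b
      + (if 1 ≤ b.val ∧ b.val ≤ r + 1 then y (r + 1) b.val else 0)
          * Ap N y r a ⟨b.val - 1, by omega⟩ := by
  rw [Ap_succ, mul_Umat_apply]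
  congr 2
  by_cases h1 : 1 ≤ b.val
  · rw [if_pos h1]
    by_cases h2 : b.val ≤ r + 1
    · rw [if_pos h2, if_pos ⟨h1, h2⟩]
    · rw [if_neg h2, if_neg (by tauto)]
  · rw [if_neg h1, if_neg (by tauto)]

lemma Ap_support (N : ℕ) (y : ℕ → ℕ → ℝ) (r : ℕ) (a b : Fin N)
    (hab : a ≠ b) (hrb : r < b.val) : Ap N y r a b = 0 := by
  induction r with
  | zero => simp [Ap, Matrix.one_apply, hab]
  | succ n ih =>
    rw [Ap_entry_succ, ih (by omega), if_neg (by omega), zero_add, zero_mul]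


section core

variable (N i : ℕ) (y : ℕ → ℕ → ℝ) (hN : 0 < N)

/-- embed ℕ into `Fin N` -/
def fN (x : ℕ) : Fin N := ⟨x % N, Nat.mod_lt _ hN⟩

lemma fN_val (x : ℕ) (h : x < N) : (fN N hN x).val = x := Nat.mod_eq_of_lt h

/-- the `Δ_i`-type minor of the partial product `Ap r`, with Lean's reversed column order:
columns `r, r-1, …, r-i+1`. -/
def Dm (r : ℕ) : ℝ :=
  Matrix.det (Matrix.of fun a b : Fin i =>
    Ap N y r (fN N hN a.val) (fN N hN (r - b.val)))

/-- the swap-type minor: columns `r, r-1, …, r-i+2, r-i`. -/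
def Em (r : ℕ) : ℝ :=
  Matrix.det (Matrix.of fun a b : Fin i =>
    Ap N y r (fN N hN a.val) (fN N hN (if b.val = i - 1 then r - i else r - b.val)))

lemma Ap_entry_succ' (r : ℕ) (a : Fin N) (j : ℕ) (hj : j < N) (hj1 : 1 ≤ j) (hj2 : j ≤ r + 1) :
    Ap N y (r + 1) a (fN N hN j) = Ap N y r a (fN N hN j)
      + y (r + 1) j * Ap N y r a (fN N hN (j - 1)) := by
  rw [Ap_entry_succ]
  have hv : (fN N hN j).val = j := fN_val N hN _ hj
  rw [if_pos (by rw [hv]; exact ⟨hj1, hj2⟩)]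
  congr 2
  · rw [hv]
  · congr 1
    apply Fin.ext
    simp only [fN_val N hN (j-1) (by omega)]
    rw [hv]

lemma Dm_rec (r : ℕ) (hi : 1 ≤ i) (hir : i ≤ r + 1) (hrN : r + 1 < N)
    (hynz : ∀ l, 1 ≤ l → l ≤ r + 1 → y (r + 1) l ≠ 0) :
    Dm N i y hN (r + 1) = (∏ b : Fin i, y (r + 1) (r + 1 - b.val)) * Dm N i y hN r := by
  classical
  set M2 : Matrix (Fin i) (Fin i) ℝ :=
    Matrix.of (fun a b : Fin i =>
      y (r + 1) (r + 1 - b.val) * Ap N y r (fN N hN a.val) (fN N hN (r - b.val))) with hM2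
  have key : (Matrix.of fun a b : Fin i =>
      Ap N y (r + 1) (fN N hN a.val) (fN N hN (r + 1 - b.val)))
      = M2 * Umat i (fun l => (y (r + 1) (r + 2 - l))⁻¹) := by
    ext a b
    rw [Matrix.of_apply, mul_Umat_apply]
    have hb : b.val < i := b.isLt
    have ha : a.val < i := a.isLt
    -- compute LHS via Ap_entry_succ
    rw [Ap_entry_succ' N y hN r _ (r + 1 - b.val) (by omega) (by omega) (by omega)]
    rw [show r + 1 - b.val - 1 = r - b.val by omega]
    by_cases hb0 : 1 ≤ b.val
    · rw [if_pos hb0]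
      have hbm : (⟨b.val - 1, by omega⟩ : Fin i).val = b.val - 1 := rfl
      simp only [hM2, Matrix.of_apply, hbm]
      have e1 : r + 1 - (b.val - 1) = r + 2 - b.val := by omega
      have e2 : r - (b.val - 1) = r + 1 - b.val := by omega
      rw [e1, e2]
      rw [← mul_assoc, inv_mul_cancel₀ (hynz _ (by omega) (by omega)), one_mul]
      rw [add_comm]
    · -- b = 0 : first term vanishes by support
      have hb0' : b.val = 0 := by omega
      rw [if_neg hb0, zero_mul, add_zero]
      rw [Ap_support N y r _ _ ?hne ?hlt]
      · simp only [hM2, Matrix.of_apply, hb0', zero_add]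
      · intro h
        have := congrArg Fin.val h
        rw [fN_val N hN _ (by omega), fN_val N hN _ (by omega)] at this
        omega
      · rw [fN_val N hN _ (by omega)]; omega
  rw [Dm, key, Matrix.det_mul, Umat_det, mul_one, hM2]
  rw [show (Matrix.of fun a b : Fin i =>
      y (r + 1) (r + 1 - b.val) * Ap N y r (fN N hN a.val) (fN N hN (r - b.val)))
    = Matrix.of (fun a b : Fin i => (fun b : Fin i => y (r + 1) (r + 1 - b.val)) b *
        (Matrix.of fun a b : Fin i => Ap N y r (fN N hN a.val) (fN N hN (r - b.val))) a b) from rfl]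
  rw [Matrix.det_mul_row]
  rfl

lemma Em_rec (r : ℕ) (hi : 1 ≤ i) (hir : i ≤ r + 1) (hrN : r + 1 < N)
    (hynz : ∀ l, 1 ≤ l → l ≤ r + 1 → y (r + 1) l ≠ 0) :
    Em N i y hN (r + 1)
      = (∏ b : Fin i, if b.val = i - 1 then 1 else y (r + 1) (r + 1 - b.val))
        * (Dm N i y hN r
            + (if 1 ≤ r + 1 - i then y (r + 1) (r + 1 - i) else 0) * Em N i y hN r) := by
  classical
  set coef : ℝ := if 1 ≤ r + 1 - i then y (r + 1) (r + 1 - i) else 0 with hcoef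
  set li : Fin i := ⟨i - 1, by omega⟩ with hli
  set base : Matrix (Fin i) (Fin i) ℝ :=
    Matrix.of (fun a b : Fin i =>
      y (r + 1) (r + 1 - b.val) * Ap N y r (fN N hN a.val) (fN N hN (r - b.val))) with hbase
  set u : Fin i → ℝ := fun a => Ap N y r (fN N hN a.val) (fN N hN (r + 1 - i)) with hu
  set w : Fin i → ℝ := fun a => Ap N y r (fN N hN a.val) (fN N hN (r - i)) with hw
  set M2 : Matrix (Fin i) (Fin i) ℝ := base.updateCol li (u + coef • w) with hM2
  have key : (Matrix.of fun a b : Fin i =>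
      Ap N y (r + 1) (fN N hN a.val) (fN N hN (if b.val = i - 1 then r + 1 - i else r + 1 - b.val)))
      = M2 * Umat i (fun l => if l + 1 ≤ i - 1 then (y (r + 1) (r + 2 - l))⁻¹ else 0) := by
    ext a b
    rw [Matrix.of_apply, mul_Umat_apply]
    have hb : b.val < i := b.isLt
    by_cases hbi : b.val = i - 1
    · -- last column: no column operation
      rw [if_pos hbi]
      rw [show (if 1 ≤ b.val then (if b.val + 1 ≤ i - 1 then (y (r + 1) (r + 2 - b.val))⁻¹ else 0) else 0) = 0 by
        rw [if_neg (by omega : ¬ (b.val + 1 ≤ i - 1))]; simp]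
      rw [zero_mul, add_zero, hM2, Matrix.updateCol_apply, if_pos (by apply Fin.ext; simp [hli, hbi])]
      simp only [Pi.add_apply, Pi.smul_apply, smul_eq_mul, hu, hw, hcoef]
      by_cases hri : 1 ≤ r + 1 - i
      · rw [if_pos hri, Ap_entry_succ' N y hN r _ (r + 1 - i) (by omega) hri (by omega),
          show r + 1 - i - 1 = r - i by omega]
      · rw [if_neg hri, zero_mul, add_zero]
        have h0 : r + 1 - i = 0 := by omega
        rw [h0, Ap_entry_succ N y r]
        rw [if_neg (by rw [fN_val N hN 0 (by omega)]; omega), zero_mul, add_zero]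
    · -- other columns
      rw [if_neg hbi]
      have hbi' : b.val ≤ i - 2 := by omega
      have hM2off : ∀ (b' : Fin i), b'.val ≠ i - 1 →
          M2 a b' = y (r + 1) (r + 1 - b'.val) * Ap N y r (fN N hN a.val) (fN N hN (r - b'.val)) := by
        intro b' hb'
        rw [hM2, Matrix.updateCol_apply, if_neg (by intro h; exact hb' (by rw [h, hli]))]
        rfl
      rw [hM2off b hbi]
      by_cases hb0 : 1 ≤ b.val
      · rw [if_pos hb0, if_pos (by omega)]
        rw [hM2off ⟨b.val - 1, by omega⟩ (by simp; omega)]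
        rw [show r + 1 - (b.val - 1) = r + 2 - b.val by omega,
          show r - (b.val - 1) = r + 1 - b.val by omega]
        rw [← mul_assoc, inv_mul_cancel₀ (hynz _ (by omega) (by omega)), one_mul]
        rw [Ap_entry_succ' N y hN r _ (r + 1 - b.val) (by omega) (by omega) (by omega),
          show r + 1 - b.val - 1 = r - b.val by omega]
        ring
      · -- b = 0 (and 0 < i-1)
        rw [if_neg hb0, zero_mul, add_zero]
        have hb00 : b.val = 0 := by omega
        rw [hb00]
        simp only [Nat.sub_zero]
        rw [Ap_entry_succ' N y hN r _ (r + 1) (by omega) (by omega) (by omega)]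
        rw [Ap_support N y r _ _ ?hne ?hlt]
        · rw [zero_add, show r + 1 - 1 = r by omega]
        case hne =>
          intro h
          have := congrArg Fin.val h
          rw [fN_val N hN _ (by omega), fN_val N hN _ (by omega)] at this
          omega
        case hlt => rw [fN_val N hN _ (by omega)]; omega
  -- now compute the determinant
  rw [Em, key, Matrix.det_mul, Umat_det, mul_one, hM2]
  rw [Matrix.det_updateCol_add, Matrix.det_updateCol_smul]
  have hD : base.updateCol li u
      = Matrix.of (fun a b : Fin i => (fun b : Fin i => if b.val = i - 1 then 1 else y (r + 1) (r + 1 - b.val)) b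
          * (Matrix.of fun a b : Fin i => Ap N y r (fN N hN a.val) (fN N hN (r - b.val))) a b) := by
    ext a b
    simp only [Matrix.updateCol_apply, Matrix.of_apply]
    by_cases hbi : b = li
    · rw [if_pos hbi, if_pos (by rw [hbi, hli]), one_mul, hu]
      have : r - b.val = r + 1 - i := by
        have : b.val = i - 1 := by rw [hbi, hli]
        omega
      rw [this]
    · rw [if_neg hbi, if_neg (fun h => hbi (Fin.ext (by rw [h, hli])))]
      rw [hbase]; rfl
  have hE : base.updateCol li w
      = Matrix.of (fun a b : Fin i => (fun b : Fin i => if b.val = i - 1 then 1 else y (r + 1) (r + 1 - b.val)) b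
          * (Matrix.of fun a b : Fin i =>
              Ap N y r (fN N hN a.val) (fN N hN (if b.val = i - 1 then r - i else r - b.val))) a b) := by
    ext a b
    simp only [Matrix.updateCol_apply, Matrix.of_apply]
    by_cases hbi : b = li
    · rw [if_pos hbi, if_pos (by rw [hbi, hli]), one_mul, hw, if_pos (by rw [hbi, hli])]
    · rw [if_neg hbi, if_neg (fun h => hbi (Fin.ext (by rw [h, hli]))),
        if_neg (fun h => hbi (Fin.ext (by rw [h, hli])))]
      rw [hbase]; rfl
  rw [hD, hE, Matrix.det_mul_row, Matrix.det_mul_row]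
  rw [← Dm, ← Em]
  ring

lemma prod_range_shift (f : ℕ → ℝ) (n s : ℕ) (hns : n ≤ s + 1) :
    ∏ j ∈ Finset.range n, f (s - j) = ∏ l ∈ Finset.Icc (s + 1 - n) s, f l := by
  apply Finset.prod_nbij' (fun j => s - j) (fun l => s - l)
  · intro a ha; simp only [Finset.mem_range] at ha; simp only [Finset.mem_Icc]; omega
  · intro a ha; simp only [Finset.mem_Icc] at ha; simp only [Finset.mem_range]; omega
  · intro a ha; simp only [Finset.mem_range] at ha; omega
  · intro a ha; simp only [Finset.mem_Icc] at ha; omega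
  · intro a ha; rfl

lemma prod_fin_shift (f : ℕ → ℝ) (n s : ℕ) (hns : n ≤ s + 1) :
    ∏ b : Fin n, f (s - b.val) = ∏ l ∈ Finset.Icc (s + 1 - n) s, f l := by
  rw [Fin.prod_univ_eq_prod_range (fun j => f (s - j)) n]
  exact prod_range_shift f n s hns

lemma prod_fin_shift' (f : ℕ → ℝ) (n s : ℕ) (hns : n ≤ s + 1) (hn : 1 ≤ n) :
    (∏ b : Fin n, if b.val = n - 1 then 1 else f (s - b.val))
      = ∏ l ∈ Finset.Icc (s + 2 - n) s, f l := by
  rw [Fin.prod_univ_eq_prod_range (fun j => if j = n - 1 then 1 else f (s - j)) n]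
  obtain ⟨m, rfl⟩ : ∃ m, n = m + 1 := ⟨n - 1, by omega⟩
  rw [Finset.prod_range_succ, if_pos (by omega), mul_one]
  rw [Finset.prod_congr rfl (fun j hj => by
    rw [if_neg (by simp only [Finset.mem_range] at hj; omega)])]
  rw [show s + 2 - (m + 1) = s + 1 - m by omega, prod_range_shift f m s (by omega)]

/-- `P`-monomial: product of the `i-1` upper `y`'s at level `m`. -/
def Pp (m : ℕ) : ℝ := ∏ l ∈ Finset.Icc (m - i + 2) m, y m l
def Qq (m : ℕ) : ℝ := y m (m - i + 1)
def Rr (m : ℕ) : ℝ := y m (m - i)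

def Tt (r k : ℕ) : ℝ :=
  (∏ m ∈ Finset.Icc i r, Pp i y m) * (∏ m ∈ Finset.Icc i (k - 1), Qq i y m)
    * (∏ m ∈ Finset.Icc (k + 1) r, Rr i y m)

lemma Dm_formula (hi : 1 ≤ i) (hiN : i ≤ N - 1)
    (hy : ∀ k l, 1 ≤ l → l ≤ k → k ≤ N - 1 → y k l ≠ 0) :
    ∀ r, i - 1 ≤ r → r ≤ N - 1 →
      Dm N i y hN r
        = (∏ m ∈ Finset.Icc i r, (Qq i y m * Pp i y m)) * Dm N i y hN (i - 1) := by
  intro r hr hrN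
  revert hrN
  induction r, hr using Nat.le_induction with
  | base =>
    intro _
    rw [Finset.Icc_eq_empty (by omega), Finset.prod_empty, one_mul]
  | succ r hr ih =>
    intro hrN
    rw [Dm_rec N i y hN r hi (by omega) (by omega)
      (fun l hl1 hl2 => hy (r + 1) l hl1 hl2 (by omega))]
    rw [ih (by omega)]
    rw [prod_fin_shift (y (r + 1)) i (r + 1) (by omega)]
    have hsplit : ∏ l ∈ Finset.Icc (r + 1 + 1 - i) (r + 1), y (r + 1) l
        = Qq i y (r + 1) * Pp i y (r + 1) := by
      rw [show Finset.Icc (r + 1 + 1 - i) (r + 1)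
          = Finset.Icc (r + 2 - i) (r + 1) by rw [show r + 1 + 1 - i = r + 2 - i by omega]]
      rw [← Finset.Ico_add_one_right_eq_Icc, Finset.prod_eq_prod_Ico_succ_bot (by omega), Finset.Ico_add_one_right_eq_Icc]
      rw [Qq, Pp, show r + 2 - i + 1 = r + 1 - i + 2 by omega, show r + 2 - i = r + 1 - i + 1 by omega]
    rw [hsplit, Finset.prod_Icc_succ_top (by omega)]
    ring

lemma Em_formula (hi : 1 ≤ i) (hiN : i ≤ N - 1)
    (hy : ∀ k l, 1 ≤ l → l ≤ k → k ≤ N - 1 → y k l ≠ 0) :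
    ∀ r, i ≤ r → r ≤ N - 1 →
      Em N i y hN r
        = (∑ k ∈ Finset.Icc i r, Tt i y r k) * Dm N i y hN (i - 1) := by
  intro r hr hrN
  revert hrN
  induction r, hr using Nat.le_induction with
  | base =>
    intro hiN'
    obtain ⟨m, rfl⟩ : ∃ m, i = m + 1 := ⟨i - 1, by omega⟩
    rw [Em_rec N (m + 1) y hN m hi (by omega) (by omega)
      (fun l hl1 hl2 => hy (m + 1) l hl1 hl2 (by omega))]
    rw [if_neg (by omega), zero_mul, add_zero]
    rw [prod_fin_shift' (y (m + 1)) (m + 1) (m + 1) (by omega) (by omega)]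
    rw [Finset.Icc_self, Finset.sum_singleton]
    rw [Tt, Finset.Icc_eq_empty (by omega : ¬ (m + 1 ≤ m + 1 - 1)), Finset.prod_empty,
      Finset.Icc_eq_empty (by omega : ¬ (m + 1 + 1 ≤ m + 1)), Finset.prod_empty,
      Finset.Icc_self, Finset.prod_singleton]
    rw [Pp, show m + 1 - (m + 1) + 2 = m + 1 + 2 - (m + 1) by omega,
      show m + 1 - 1 = m by omega]
    ring
  | succ r hr ih =>
    intro hrN
    rw [Em_rec N i y hN r hi (by omega) (by omega)
      (fun l hl1 hl2 => hy (r + 1) l hl1 hl2 (by omega))]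
    rw [if_pos (by omega : 1 ≤ r + 1 - i)]
    rw [Dm_formula N i y hN hi hiN hy r (by omega) (by omega), ih (by omega)]
    rw [prod_fin_shift' (y (r + 1)) i (r + 1) (by omega) hi]
    have hP : ∏ l ∈ Finset.Icc (r + 1 + 2 - i) (r + 1), y (r + 1) l = Pp i y (r + 1) := by
      rw [Pp, show r + 1 - i + 2 = r + 1 + 2 - i by omega]
    have hR : y (r + 1) (r + 1 - i) = Rr i y (r + 1) := rfl
    rw [hP, hR]
    rw [Finset.sum_Icc_succ_top (by omega : i ≤ r + 1)]
    have hsum : ∑ k ∈ Finset.Icc i r, Tt i y (r + 1) k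
        = (Pp i y (r + 1) * Rr i y (r + 1)) * ∑ k ∈ Finset.Icc i r, Tt i y r k := by
      rw [Finset.mul_sum]
      apply Finset.sum_congr rfl
      intro k hk
      rw [Finset.mem_Icc] at hk
      rw [Tt, Tt, Finset.prod_Icc_succ_top (by omega : i ≤ r + 1),
        Finset.prod_Icc_succ_top (by omega : k + 1 ≤ r + 1)]
      ring
    have htop : Tt i y (r + 1) (r + 1)
        = (∏ m ∈ Finset.Icc i r, Pp i y m) * Pp i y (r + 1)
          * (∏ m ∈ Finset.Icc i r, Qq i y m) := by
      rw [Tt, Finset.prod_Icc_succ_top (by omega : i ≤ r + 1),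
        Finset.Icc_eq_empty (by omega : ¬ (r + 1 + 1 ≤ r + 1)), Finset.prod_empty,
        show r + 1 - 1 = r by omega]
      ring
    rw [hsum, htop, Finset.prod_mul_distrib]
    ring

end core

lemma prod_shift1 (f : ℕ → ℝ) (a b : ℕ) :
    ∏ m ∈ Finset.Icc a b, f (m + 1) = ∏ m ∈ Finset.Icc (a + 1) (b + 1), f m := by
  apply Finset.prod_nbij' (fun m => m + 1) (fun m => m - 1)
  · intro x hx; simp only [Finset.mem_Icc] at *; omega
  · intro x hx; simp only [Finset.mem_Icc] at *; omega
  · intro x hx; omega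
  · intro x hx; simp only [Finset.mem_Icc] at hx; omega
  · intro x hx; rfl

lemma w0_mul_w0 (N : ℕ) : w0 N * w0 N = 1 := by
  ext a b
  rw [Matrix.mul_apply]
  rw [Finset.sum_eq_single (⟨N - 1 - a.val, by omega⟩ : Fin N)]
  · simp only [w0, Matrix.of_apply, Matrix.one_apply]
    have ha : a.val ≤ N - 1 := by omega
    rw [if_pos (by simp; omega)]
    by_cases hab : a = b
    · rw [if_pos (by simp; omega : (⟨N - 1 - a.val, by omega⟩ : Fin N).val + b.val + 2 = N + 1),
        if_pos hab, one_mul]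
    · rw [if_neg (by simp; have := Fin.val_ne_of_ne hab; omega), if_neg hab, mul_zero]
  · intro c _ hc
    simp only [w0, Matrix.of_apply]
    rw [if_neg (by have : c.val ≠ N - 1 - a.val := fun h => hc (Fin.ext h); omega), zero_mul]
  · intro h
    exact absurd (Finset.mem_univ _) h

lemma w0_inv (N : ℕ) : (w0 N)⁻¹ = w0 N := Matrix.inv_eq_right_inv (w0_mul_w0 N)

lemma mul_w0_apply (N : ℕ) (x : Matrix (Fin N) (Fin N) ℝ) (a b : Fin N) :
    (x * w0 N) a b = x a ⟨N - 1 - b.val, by omega⟩ := by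
  rw [Matrix.mul_apply]
  rw [Finset.sum_eq_single (⟨N - 1 - b.val, by omega⟩ : Fin N)]
  · simp only [w0, Matrix.of_apply]
    rw [if_pos (by simp; omega)]
    rw [mul_one]
  · intro c _ hc
    simp only [w0, Matrix.of_apply]
    rw [if_neg (by have : c.val ≠ N - 1 - b.val := fun h => hc (Fin.ext h); omega), mul_zero]
  · intro h
    exact absurd (Finset.mem_univ _) h

end SwapMinor

set_option maxHeartbeats 2000000
open SwapMinor

/-- with the convention `y_{N,k} = 1`,
`Δ_{i,i+1}(x w₀⁻¹) = Δ_i(x w₀⁻¹) · Σ_{k=i}^{N−1} ∏_{m=k}^{N−1} y_{m+1,m−i+1}/y_{m,m−i+1}`. -/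
theorem swap_minor_ratio (N : ℕ) (hN : 2 ≤ N) (y : ℕ → ℕ → ℝ)
    (hy : ∀ k i : ℕ, 1 ≤ i → i ≤ k → k ≤ N - 1 → y k i ≠ 0)
    (hyN : ∀ k : ℕ, y N k = 1)
    (i : ℕ) (hi1 : 1 ≤ i) (hi2 : i ≤ N - 1) :
    leadingSwapMinor N (xprod N y * (w0 N)⁻¹) i
      = leadingMinor N (xprod N y * (w0 N)⁻¹) i *
          ∑ k ∈ Finset.Icc i (N - 1),
            ∏ m ∈ Finset.Icc k (N - 1), (y (m + 1) (m - i + 1) / y m (m - i + 1)) := by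
  have hN0 : 0 < N := by omega
  have hy' : ∀ k l : ℕ, 1 ≤ l → l ≤ k → k ≤ N - 1 → y k l ≠ 0 := hy
  rw [w0_inv]
  -- identify the two minors with Em and Dm
  have hswap : leadingSwapMinor N (xprod N y * w0 N) i = Em N i y hN0 (N - 1) := by
    rw [leadingSwapMinor, Em]
    congr 1
    ext a b
    have ha : a.val < i := a.isLt
    have hb : b.val < i := b.isLt
    rw [Matrix.of_apply, Matrix.of_apply,
      dif_pos ⟨by omega, by split <;> omega⟩, mul_w0_apply]
    congr 1
    · apply Fin.ext; rw [fN_val N hN0 _ (by omega)]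
    · apply Fin.ext
      rw [fN_val N hN0 _ (by split <;> omega)]
      simp only []
      split
      · rw [if_pos (by omega)]
      · rw [if_neg (by omega)]
  have hlead : leadingMinor N (xprod N y * w0 N) i = Dm N i y hN0 (N - 1) := by
    rw [leadingMinor, Dm]
    congr 1
    ext a b
    have ha : a.val < i := a.isLt
    have hb : b.val < i := b.isLt
    rw [Matrix.of_apply, Matrix.of_apply, dif_pos ⟨by omega, by omega⟩, mul_w0_apply]
    congr 1
    · apply Fin.ext; rw [fN_val N hN0 _ (by omega)]
    · apply Fin.ext; rw [fN_val N hN0 _ (by omega)]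
  rw [hswap, hlead]
  rw [Em_formula N i y hN0 hi1 hi2 hy' (N - 1) hi2 le_rfl]
  rw [Dm_formula N i y hN0 hi1 hi2 hy' (N - 1) (by omega) le_rfl]
  have hterm : ∀ k ∈ Finset.Icc i (N - 1),
      Tt i y (N - 1) k
        = (∏ m ∈ Finset.Icc i (N - 1), (Qq i y m * Pp i y m))
            * ∏ m ∈ Finset.Icc k (N - 1), (y (m + 1) (m - i + 1) / y m (m - i + 1)) := by
    intro k hk
    rw [Finset.mem_Icc] at hk
    have hden : (∏ m ∈ Finset.Icc k (N - 1), y m (m - i + 1)) ≠ 0 := by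
      apply Finset.prod_ne_zero_iff.mpr
      intro m hm
      rw [Finset.mem_Icc] at hm
      exact hy' m (m - i + 1) (by omega) (by omega) (by omega)
    rw [Finset.prod_div_distrib]
    -- numerator
    have hnum : (∏ m ∈ Finset.Icc k (N - 1), y (m + 1) (m - i + 1))
        = ∏ m ∈ Finset.Icc (k + 1) (N - 1), Rr i y m := by
      rw [show N - 1 = (N - 2) + 1 by omega,
        Finset.prod_Icc_succ_top (by omega : k ≤ N - 2 + 1)]
      rw [show N - 2 + 1 = N - 1 by omega]
      rw [show y (N - 1 + 1) (N - 1 - i + 1) = 1 by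
        rw [show N - 1 + 1 = N by omega]; exact hyN _]
      rw [mul_one]
      have hcong : ∏ m ∈ Finset.Icc k (N - 2), y (m + 1) (m - i + 1)
          = ∏ m ∈ Finset.Icc k (N - 2), Rr i y (m + 1) := by
        apply Finset.prod_congr rfl
        intro m hm
        rw [Finset.mem_Icc] at hm
        rw [Rr, show m + 1 - i = m - i + 1 by omega]
      rw [hcong]
      rw [prod_shift1 (Rr i y) k (N - 2)]
      rw [show N - 2 + 1 = N - 1 by omega]
    rw [hnum]
    -- split Q product
    have hIccIco : ∀ (a b : ℕ), 0 < b → Finset.Icc a (b - 1) = Finset.Ico a b := by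
      intro a b hb
      rw [← Finset.Ico_add_one_right_eq_Icc]
      congr 1
      omega
    have hQsplit : (∏ m ∈ Finset.Icc i (N - 1), Qq i y m)
        = (∏ m ∈ Finset.Icc i (k - 1), Qq i y m)
            * ∏ m ∈ Finset.Icc k (N - 1), Qq i y m := by
      rw [hIccIco i N hN0, hIccIco i k (by omega), hIccIco k N hN0]
      rw [Finset.prod_Ico_consecutive _ (by omega) (by omega)]
    have hQden : (∏ m ∈ Finset.Icc k (N - 1), y m (m - i + 1))
        = ∏ m ∈ Finset.Icc k (N - 1), Qq i y m := rfl
    have hden' : (∏ m ∈ Finset.Icc k (N - 1), Qq i y m) ≠ 0 := hden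
    rw [hQden, Tt, Finset.prod_mul_distrib, hQsplit, ← mul_div_assoc, eq_div_iff hden']
    ring
  rw [Finset.sum_congr rfl hterm, ← Finset.mul_sum]
  ring
end
end
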